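/- arXiv:1608.02140 — 4 statements merged into one kernel-verified Lean document; each statement's English description precedes it below -/
import Mathlib

section
/- Let C be a cycle graph and let G be a multigraph obtained from C by identifying pairs of edges according to a matching. If G is obtained via a sequence of 'LC gluings' (each gluing identifies two edges that currently share at least one endpoint), then G contains at most one cycle. -/
open Finset

namespace MogamiPaper

/-- State of an identification process on the cycle with `n+3` edges: a vertex
labeling and an edge labeling (both quotients of `Fin (n+3)`). -/
abbrev GState (n : ℕ) := (Fin (n + 3) → Fin (n + 3)) × (Fin (n + 3) → Fin (n + 3))

/-- the endpoints of edge `i` of the cycle, under the vertex labeling `p` -/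
def ends {n : ℕ} (p : Fin (n + 3) → Fin (n + 3)) (i : Fin (n + 3)) :
    Finset (Fin (n + 3)) := {p i, p (i + 1)}

/-- One LC gluing: identify two (currently distinct) edge classes whose current
endpoint sets share at least one vertex, identifying endpoints correspondingly. -/
def LCGlue {n : ℕ} (s t : GState n) : Prop :=
  ∃ a b : Fin (n + 3), s.2 a ≠ s.2 b ∧ (ends s.1 a ∩ ends s.1 b).Nonempty ∧
    ∃ φ ψ : Fin (n + 3) → Fin (n + 3),
      t.1 = φ ∘ s.1 ∧ t.2 = ψ ∘ s.2 ∧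
      (∀ x, x ≠ s.2 b → ψ x = x) ∧ ψ (s.2 b) = s.2 a ∧
      ((φ (s.1 b) = s.1 a ∧ φ (s.1 (b + 1)) = s.1 (a + 1)) ∨
       (φ (s.1 b) = s.1 (a + 1) ∧ φ (s.1 (b + 1)) = s.1 a)) ∧
      (∀ x, x ∉ ends s.1 b → φ x = x)

/-- Key combinatorial lemma: if `φ` fixes everything outside `{B1, B2}` and some
element of `{B1, B2}` is mapped by `φ` into `{B1, B2}`, then the image of a set
containing `B1, B2` loses at most one element. -/
lemma key_lemma {α : Type*} [DecidableEq α] (S : Finset α) (φ : α → α)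
    (B1 B2 : α) (hB1 : B1 ∈ S) (hB2 : B2 ∈ S)
    (hwc : ∃ w, (w = B1 ∨ w = B2) ∧ (φ w = B1 ∨ φ w = B2))
    (hfix : ∀ x, x ≠ B1 → x ≠ B2 → φ x = x) :
    ∃ x ∈ S, S.erase x ⊆ S.image φ := by
  obtain ⟨w, hw, hc⟩ := hwc
  have hwS : w ∈ S := by rcases hw with h | h <;> subst h <;> assumption
  rcases hc with hc | hc
  · -- φ w = B1, take x = B2
    refine ⟨B2, hB2, ?_⟩
    intro y hy
    rw [Finset.mem_erase] at hy
    obtain ⟨hyx, hyS⟩ := hy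
    by_cases h1 : y = B1
    · subst h1
      exact Finset.mem_image.mpr ⟨w, hwS, hc⟩
    · exact Finset.mem_image.mpr ⟨y, hyS, hfix y h1 hyx⟩
  · -- φ w = B2, take x = B1
    refine ⟨B1, hB1, ?_⟩
    intro y hy
    rw [Finset.mem_erase] at hy
    obtain ⟨hyx, hyS⟩ := hy
    by_cases h2 : y = B2
    · subst h2
      exact Finset.mem_image.mpr ⟨w, hwS, hc⟩
    · exact Finset.mem_image.mpr ⟨y, hyS, hfix y hyx h2⟩

/-- One LC gluing decreases the number of edge classes by one and the number of
vertex classes by at most one. -/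
lemma glue_step {n : ℕ} (s t : GState n) (hst : LCGlue s t)
    (ih : (Finset.univ.image s.2).card ≤ (Finset.univ.image s.1).card) :
    (Finset.univ.image t.2).card ≤ (Finset.univ.image t.1).card := by
  obtain ⟨a, b, hab, hshared, φ, ψ, ht1, ht2, hψfix, hψb, hor, hφfix⟩ := hst
  set S : Finset (Fin (n + 3)) := Finset.univ.image s.1 with hS
  set T : Finset (Fin (n + 3)) := Finset.univ.image s.2 with hT
  have hβT : s.2 b ∈ T := Finset.mem_image_of_mem _ (Finset.mem_univ b)
  have hαT : s.2 a ∈ T := Finset.mem_image_of_mem _ (Finset.mem_univ a)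
  have hB1S : s.1 b ∈ S := Finset.mem_image_of_mem _ (Finset.mem_univ b)
  have hB2S : s.1 (b + 1) ∈ S := Finset.mem_image_of_mem _ (Finset.mem_univ (b + 1))
  -- edge side: image of t.2 ⊆ T.erase (s.2 b)
  have hedge : Finset.univ.image t.2 ⊆ T.erase (s.2 b) := by
    intro y hy
    rw [Finset.mem_image] at hy
    obtain ⟨x, _, hx⟩ := hy
    rw [ht2] at hx
    simp only [Function.comp_apply] at hx
    rw [Finset.mem_erase]
    by_cases hxb : s.2 x = s.2 b
    · rw [hxb, hψb] at hx
      subst hx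
      exact ⟨hab, hαT⟩
    · rw [hψfix _ hxb] at hx
      subst hx
      exact ⟨hxb, Finset.mem_image_of_mem _ (Finset.mem_univ x)⟩
  have hedgecard : (Finset.univ.image t.2).card ≤ T.card - 1 := by
    calc (Finset.univ.image t.2).card ≤ (T.erase (s.2 b)).card :=
          Finset.card_le_card hedge
      _ = T.card - 1 := Finset.card_erase_of_mem hβT
  -- vertex side
  have hA : s.1 a = s.1 b ∨ s.1 a = s.1 (b + 1) ∨ s.1 (a + 1) = s.1 b ∨
      s.1 (a + 1) = s.1 (b + 1) := by
    obtain ⟨v, hv⟩ := hshared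
    rw [Finset.mem_inter] at hv
    obtain ⟨hva, hvb⟩ := hv
    simp only [ends, Finset.mem_insert, Finset.mem_singleton] at hva hvb
    rcases hva with h | h <;> subst h
    · rcases hvb with h | h
      · exact Or.inl h
      · exact Or.inr (Or.inl h)
    · rcases hvb with h | h
      · exact Or.inr (Or.inr (Or.inl h))
      · exact Or.inr (Or.inr (Or.inr h))
  have hwc : ∃ w, (w = s.1 b ∨ w = s.1 (b + 1)) ∧
      (φ w = s.1 b ∨ φ w = s.1 (b + 1)) := by
    rcases hor with ⟨h1, h2⟩ | ⟨h1, h2⟩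
    · rcases hA with h | h | h | h
      · exact ⟨s.1 b, Or.inl rfl, Or.inl (h1.trans h)⟩
      · exact ⟨s.1 b, Or.inl rfl, Or.inr (h1.trans h)⟩
      · exact ⟨s.1 (b + 1), Or.inr rfl, Or.inl (h2.trans h)⟩
      · exact ⟨s.1 (b + 1), Or.inr rfl, Or.inr (h2.trans h)⟩
    · rcases hA with h | h | h | h
      · exact ⟨s.1 (b + 1), Or.inr rfl, Or.inl (h2.trans h)⟩
      · exact ⟨s.1 (b + 1), Or.inr rfl, Or.inr (h2.trans h)⟩
      · exact ⟨s.1 b, Or.inl rfl, Or.inl (h1.trans h)⟩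
      · exact ⟨s.1 b, Or.inl rfl, Or.inr (h1.trans h)⟩
  have hφfix' : ∀ x, x ≠ s.1 b → x ≠ s.1 (b + 1) → φ x = x := by
    intro x h1 h2
    apply hφfix
    simp only [ends, Finset.mem_insert, Finset.mem_singleton]
    exact not_or.mpr ⟨h1, h2⟩
  obtain ⟨x, hxS, hsub⟩ := key_lemma S φ (s.1 b) (s.1 (b + 1)) hB1S hB2S hwc hφfix'
  have himg : S.image φ = Finset.univ.image t.1 := by
    rw [ht1, ← Finset.image_image]
  have hvert : S.card - 1 ≤ (Finset.univ.image t.1).card := by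
    calc S.card - 1 = (S.erase x).card := (Finset.card_erase_of_mem hxS).symm
      _ ≤ (S.image φ).card := Finset.card_le_card hsub
      _ = _ := by rw [himg]
  calc (Finset.univ.image t.2).card ≤ T.card - 1 := hedgecard
    _ ≤ S.card - 1 := Nat.sub_le_sub_right ih 1
    _ ≤ _ := hvert

/-- a multigraph obtained from a cycle by a sequence of LC gluings
of its edges contains at most one cycle: since it stays connected, this says
(number of edges) ≤ (number of vertices), i.e. first Betti number ≤ 1. -/
theorem stmt1 (n : ℕ) (s : GState n)
    (h : Relation.ReflTransGen LCGlue (id, id) s) :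
    (Finset.univ.image s.2).card ≤ (Finset.univ.image s.1).card := by
  induction h with
  | refl => simp
  | tail hab hbc ih => exact glue_step _ _ hbc ih

end MogamiPaper
end

section
/- Let C be a cycle with an even number of edges and let M be a complete planar (non-crossing) matching of the edges of C. Then the multigraph G obtained from C by identifying matched edge pairs (preserving the orientation of C) is a tree. -/
namespace MogamiPaper

/-- the matching `m` on the edges of the cycle (edge `i` joins `i` and `i+1`)
is planar: no two matched pairs cross. -/
def NonCrossing {k : ℕ} (m : Fin k → Fin k) : Prop :=
  ∀ i j : Fin k, (i : ℕ) < (m i : ℕ) → (j : ℕ) < (m j : ℕ) →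
    ¬ ((i : ℕ) < (j : ℕ) ∧ (j : ℕ) < (m i : ℕ) ∧ (m i : ℕ) < (m j : ℕ))

/-- identifying edge `i` with edge `m i` preserving the orientation of the
cycle identifies the vertex `i + 1` with the vertex `m i`. -/
def glueRel {k : ℕ} [NeZero k] (m : Fin k → Fin k) : Fin k → Fin k → Prop :=
  fun u v => ∃ i : Fin k, u = i + 1 ∧ v = m i

/-- the vertex identifications generated by the matching -/
def vertexSetoid {k : ℕ} [NeZero k] (m : Fin k → Fin k) : Setoid (Fin k) :=
  ⟨Relation.EqvGen (glueRel m), Relation.EqvGen.is_equivalence _⟩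

/-!
Call an edge `i` *opening* if `i < m i`, so that the chords of the matching are the intervals
`[i, m i]` over the opening edges `i`, and say that such a chord covers the vertex `j` when
`i < j ≤ m i`. Planarity makes the chords covering a vertex a chain, and gluing edge `i` to edge
`m i` identifies two vertices covered by the same chords: the vertices just inside the two ends
of a chord, or the two vertices just outside it. So the innermost covering chord (or `⊥`) is an
invariant of the identification. Conversely, stepping across closing edges leads from any vertex
to the vertex just inside its innermost chord (or to `0`), so the invariant separates classes.
It takes `k / 2 + 1` values: `⊥` and the `k / 2` opening edges.
-/

theorem _root_.Fin.val_add_one_eq_ite {k : ℕ} [NeZero k] (i : Fin k) :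
    ((i + 1 : Fin k) : ℕ) = if (i : ℕ) + 1 = k then 0 else (i : ℕ) + 1 := by
  split_ifs with h
  · rw [Fin.val_add, Fin.val_one', Nat.add_mod_mod, h, Nat.mod_self]
  · exact Fin.val_add_one_of_lt' (lt_of_le_of_ne i.isLt h)

open Fin.NatCast in
theorem _root_.Fin.reflTransGen_add_one {k : ℕ} [NeZero k] (a b : Fin k) :
    Relation.ReflTransGen (fun i j : Fin k => j = i + 1) a b := by
  have forward (n : ℕ) : Relation.ReflTransGen (fun i j : Fin k => j = i + 1) a (a + n) := by
    induction n with
    | zero => simpa using Relation.ReflTransGen.refl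
    | succ n ih => exact ih.tail (by rw [Nat.cast_succ, add_assoc])
  simpa using forward (b - a : Fin k)

section Chords

variable {k : ℕ} {m : Fin k → Fin k}

theorem NonCrossing.apply_lt_apply (hpl : NonCrossing m) (hinv : Function.Involutive m)
    {a c : Fin k} (hc : (c : ℕ) < m c) (ha : (a : ℕ) < m a) (hca : (c : ℕ) < a)
    (hac : (a : ℕ) < m c) : (m a : ℕ) < m c := by
  have hne : (m a : ℕ) ≠ m c := fun h => hca.ne' (congrArg Fin.val (hinv.injective (Fin.ext h)))
  have := hpl c a hc ha
  omega

def coveringChords (m : Fin k → Fin k) (j : ℕ) : Finset (Fin k) :=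
  {i | (i : ℕ) < m i ∧ (i : ℕ) < j ∧ j ≤ m i}

@[simp]
theorem mem_coveringChords {j : ℕ} {i : Fin k} :
    i ∈ coveringChords m j ↔ (i : ℕ) < m i ∧ (i : ℕ) < j ∧ j ≤ m i := by
  simp [coveringChords]

theorem coveringChords_add_one_eq_of_lt (hpl : NonCrossing m) (hinv : Function.Involutive m)
    {a : Fin k} (ha : (a : ℕ) < m a) : coveringChords m (a + 1) = coveringChords m (m a) := by
  ext c
  simp only [mem_coveringChords]
  constructor
  · rintro ⟨hc, hca, hac⟩
    by_cases hca' : (c : ℕ) < a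
    · have := hpl.apply_lt_apply hinv hc ha hca' (by omega)
      omega
    · obtain rfl : c = a := Fin.ext (by omega)
      omega
  · rintro ⟨hc, hca, hac⟩
    refine ⟨hc, ?_, by omega⟩
    by_contra! hac'
    have := hpl.apply_lt_apply hinv ha hc (by omega) (by omega)
    omega

theorem coveringChords_eq_add_one_of_lt (hpl : NonCrossing m) (hinv : Function.Involutive m)
    {a : Fin k} (ha : (a : ℕ) < m a) : coveringChords m a = coveringChords m (m a + 1) := by
  ext c
  simp only [mem_coveringChords]
  constructor
  · rintro ⟨hc, hca, hac⟩
    have hac' : (a : ℕ) < m c := by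
      refine lt_of_le_of_ne hac fun h => ?_
      obtain rfl : c = m a := by rw [Fin.ext h, hinv]
      omega
    have := hpl.apply_lt_apply hinv hc ha hca hac'
    omega
  · rintro ⟨hc, hca, hac⟩
    refine ⟨hc, ?_, by omega⟩
    by_contra! hac'
    rcases hac'.lt_or_eq with hac' | hac'
    · rcases (Nat.lt_succ_iff.mp hca).lt_or_eq with hcb | hcb
      · have := hpl.apply_lt_apply hinv ha hc hac' hcb
        omega
      · obtain rfl : c = m a := Fin.ext hcb
        rw [hinv] at hac
        omega
    · obtain rfl : a = c := Fin.ext hac'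
      omega

theorem coveringChords_val_add_one [NeZero k] (i : Fin k) :
    coveringChords m ((i + 1 : Fin k) : ℕ) = coveringChords m (i + 1) := by
  rw [Fin.val_add_one_eq_ite]
  split_ifs with h
  · ext c
    have := (m c).isLt
    simp only [mem_coveringChords]
    omega
  · rfl

theorem coveringChords_val_add_one_eq [NeZero k] (hpl : NonCrossing m)
    (hinv : Function.Involutive m) (hfix : ∀ i, m i ≠ i) (i : Fin k) :
    coveringChords m ((i + 1 : Fin k) : ℕ) = coveringChords m (m i) := by
  rw [coveringChords_val_add_one]
  rcases lt_or_gt_of_ne (Fin.val_ne_of_ne (hfix i)) with h | h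
  · have := coveringChords_eq_add_one_of_lt hpl hinv (a := m i) (by rwa [hinv])
    rw [hinv] at this
    exact this.symm
  · exact coveringChords_add_one_eq_of_lt hpl hinv h

def innermostChord (m : Fin k → Fin k) (j : ℕ) : WithBot (Fin k) :=
  (coveringChords m j).max

theorem innermostChord_zero : innermostChord m 0 = ⊥ := by
  simp [innermostChord, Finset.max_eq_bot, Finset.eq_empty_iff_forall_notMem]

theorem innermostChord_add_one {i : Fin k} (hi : (i : ℕ) < m i) :
    innermostChord m (i + 1) = i :=
  le_antisymm
    (Finset.max_le fun c hc => WithBot.coe_le_coe.mpr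
      (Fin.le_iff_val_le_val.mpr (Nat.lt_succ_iff.mp (mem_coveringChords.mp hc).2.1)))
    (Finset.le_max (mem_coveringChords.mpr ⟨hi, by omega, by omega⟩))

theorem lt_apply_of_innermostChord_eq {j : ℕ} {i : Fin k} (h : innermostChord m j = i) :
    (i : ℕ) < m i :=
  (mem_coveringChords.mp (Finset.mem_of_max h)).1

theorem innermostChord_val_add_one_eq [NeZero k] (hpl : NonCrossing m)
    (hinv : Function.Involutive m) (hfix : ∀ i, m i ≠ i) (i : Fin k) :
    innermostChord m ((i + 1 : Fin k) : ℕ) = innermostChord m (m i) := by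
  rw [innermostChord, coveringChords_val_add_one_eq hpl hinv hfix, innermostChord]

def canonicalVertex [NeZero k] (m : Fin k → Fin k) (j : Fin k) : Fin k :=
  (innermostChord m j).recBotCoe 0 (· + 1)

theorem eqvGen_canonicalVertex [NeZero k] (hpl : NonCrossing m) (hinv : Function.Involutive m)
    (hfix : ∀ i, m i ≠ i) (j : Fin k) : Relation.EqvGen (glueRel m) j (canonicalVertex m j) := by
  induction j using WellFoundedLT.induction with
  | ind j ih =>
  rcases eq_or_ne j 0 with rfl | hj
  · rw [canonicalVertex, Fin.val_zero, innermostChord_zero]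
    exact .refl _
  obtain ⟨e, rfl⟩ : ∃ e : Fin k, e + 1 = j := ⟨j - 1, sub_add_cancel j 1⟩
  have hval : ((e + 1 : Fin k) : ℕ) = e + 1 := by
    have := Fin.val_add_one_eq_ite e
    split_ifs at this
    · exact absurd (Fin.ext (by simpa using this)) hj
    · exact this
  rcases lt_or_gt_of_ne (Fin.val_ne_of_ne (hfix e)) with he | he
  · have hglue : canonicalVertex m (e + 1) = canonicalVertex m (m e) := by
      rw [canonicalVertex, canonicalVertex, innermostChord_val_add_one_eq hpl hinv hfix]
    rw [hglue]
    exact (Relation.EqvGen.rel _ _ ⟨e, rfl, rfl⟩).trans _ _ _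
      (ih (m e) (Fin.lt_def.mpr (by omega)))
  · have hcan : canonicalVertex m (e + 1) = e + 1 := by
      rw [canonicalVertex, hval, innermostChord_add_one he]
      rfl
    rw [hcan]
    exact .refl _

theorem vertexSetoid_eq_ker [NeZero k] (hpl : NonCrossing m) (hinv : Function.Involutive m)
    (hfix : ∀ i, m i ≠ i) :
    vertexSetoid m = Setoid.ker fun j : Fin k => innermostChord m j := by
  refine le_antisymm (Setoid.eqvGen_le ?_) fun u v h => ?_
  · rintro _ _ ⟨i, rfl, rfl⟩
    exact innermostChord_val_add_one_eq hpl hinv hfix i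
  · have hinner : innermostChord m u = innermostChord m v := Setoid.ker_def.mp h
    have hcan : canonicalVertex m u = canonicalVertex m v := by
      rw [canonicalVertex, canonicalVertex, hinner]
    exact (eqvGen_canonicalVertex hpl hinv hfix u).trans _ _ _
      (hcan ▸ (eqvGen_canonicalVertex hpl hinv hfix v).symm)

def openingEdges (m : Fin k → Fin k) : Finset (Fin k) :=
  {i | (i : ℕ) < m i}

theorem card_openingEdges (hinv : Function.Involutive m) (hfix : ∀ i, m i ≠ i) :
    (openingEdges m).card = k / 2 := by
  have hclosing : (Finset.univ.filter fun i : Fin k => ¬ (i : ℕ) < m i).card =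
      (openingEdges m).card := by
    refine Finset.card_nbij' m m ?_ ?_ (fun a _ => hinv a) (fun a _ => hinv a)
    · intro a ha
      have := Fin.val_ne_of_ne (hfix a)
      simp only [openingEdges, Finset.coe_filter, Finset.mem_univ, true_and,
        Set.mem_ofPred_eq] at ha ⊢
      rw [hinv]
      omega
    · intro a ha
      simp only [openingEdges, Finset.coe_filter, Finset.mem_univ, true_and,
        Set.mem_ofPred_eq] at ha ⊢
      rw [hinv]
      omega
  have := Finset.card_filter_add_card_filter_not (s := Finset.univ) fun i : Fin k => (i : ℕ) < m i
  simp only [Finset.card_univ, Fintype.card_fin] at this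
  rw [openingEdges] at hclosing ⊢
  omega

theorem range_innermostChord [NeZero k] :
    Set.range (fun j : Fin k => innermostChord m j) =
      insert ⊥ ((↑) '' (openingEdges m : Set (Fin k))) := by
  ext x
  constructor
  · rintro ⟨j, rfl⟩
    dsimp only
    cases h : innermostChord m j with
    | bot => exact Or.inl rfl
    | coe i => exact Or.inr ⟨i, by simpa [openingEdges] using lt_apply_of_innermostChord_eq h, rfl⟩
  · rintro (rfl | ⟨i, hi, rfl⟩)
    · exact ⟨0, innermostChord_zero⟩
    · have hi : (i : ℕ) < m i := by simpa [openingEdges] using hi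
      have hlt : (i : ℕ) + 1 < k := lt_of_le_of_lt hi (m i).isLt
      refine ⟨i + 1, ?_⟩
      dsimp only
      rw [Fin.val_add_one_of_lt' hlt, innermostChord_add_one hi]

end Chords

theorem stmt3_general (k : ℕ) [NeZero k]
    (m : Fin k → Fin k) (hinv : Function.Involutive m) (hfix : ∀ i, m i ≠ i)
    (hpl : NonCrossing m) :
    Nat.card (Quotient (vertexSetoid m)) = k / 2 + 1 ∧
    ∀ x y : Quotient (vertexSetoid m),
      Relation.ReflTransGen
        (fun u v : Quotient (vertexSetoid m) =>
          ∃ i : Fin k,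
            (u = Quotient.mk (vertexSetoid m) i ∧
              v = Quotient.mk (vertexSetoid m) (i + 1)) ∨
            (u = Quotient.mk (vertexSetoid m) (i + 1) ∧
              v = Quotient.mk (vertexSetoid m) i)) x y := by
  refine ⟨?_, fun x y => Quotient.inductionOn₂ x y fun a b => ?_⟩
  · rw [vertexSetoid_eq_ker hpl hinv hfix, Nat.card_congr (Setoid.quotientKerEquivRange _),
      range_innermostChord, Nat.card_coe_set_eq, Set.ncard_insert_of_notMem (by simp),
      Set.ncard_image_of_injective _ WithBot.coe_injective, Set.ncard_coe_finset,
      card_openingEdges hinv hfix]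
  · exact (Fin.reflTransGen_add_one a b).lift _ fun i j h => ⟨i, Or.inl ⟨rfl, h ▸ rfl⟩⟩

/-- the multigraph obtained from a cycle with `k` edges by a
complete planar matching of its edges (identifying matched pairs preserving
orientation) is a tree: it is connected and has `k/2 + 1` vertices, i.e.
(number of vertices) = (number of edges) + 1. -/
theorem stmt3 (k : ℕ) [NeZero k] (hk : Even k)
    (m : Fin k → Fin k) (hinv : Function.Involutive m) (hfix : ∀ i, m i ≠ i)
    (hpl : NonCrossing m) :
    Nat.card (Quotient (vertexSetoid m)) = k / 2 + 1 ∧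
    ∀ x y : Quotient (vertexSetoid m),
      Relation.ReflTransGen
        (fun u v : Quotient (vertexSetoid m) =>
          ∃ i : Fin k,
            (u = Quotient.mk (vertexSetoid m) i ∧
              v = Quotient.mk (vertexSetoid m) (i + 1)) ∨
            (u = Quotient.mk (vertexSetoid m) (i + 1) ∧
              v = Quotient.mk (vertexSetoid m) i)) x y :=
  stmt3_general k m hinv hfix hpl

end MogamiPaper
end

section
/- Let C be a cycle and M a complete planar matching of its edges, and let G be the tree obtained by identifying matched pairs. For any vertex c0 of C, there is an ordering of the matched pairs realizing the identifications such that each pair, at the moment of its identification, consists of two edges sharing exactly one endpoint, except for the final pair, which shares both endpoints, one of them being (the image of) c0. -/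
/-!
Glue one ear at a time, where an ear is a matched pair of edges `a`, `m a` that are consecutive on
the cycle formed by the edges not glued yet. Before the gluing the shared vertex `a + 1 ~ m a` is
already identified, while the outer endpoints `a` and `m a + 1` are distinct vertices of that cycle;
the gluing identifies them and the remaining edges again form a cycle. An innermost-chord argument
gives every planar matching two distinct ears, and since the vertices of the cycle are pairwise
distinct, at most one of them has its shared vertex at `c0`: gluing the other one keeps `c0` on the
cycle, down to the last pair, a 2-cycle whose edges share both endpoints.
-/

namespace MogamiPaper

/-- vertex identifications performed by the first `K` matched pairs, in the
order `σ`: gluing edge `σ j` to edge `m (σ j)` (preserving orientation)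
identifies `σ j + 1 ~ m (σ j)` and `m (σ j) + 1 ~ σ j`. -/
def partEqv {k : ℕ} [NeZero k] (m : Fin k → Fin k) (σ : Fin (k / 2) → Fin k)
    (K : ℕ) : Fin k → Fin k → Prop :=
  Relation.EqvGen fun u v => ∃ j : Fin (k / 2), (j : ℕ) < K ∧
    ((u = σ j + 1 ∧ v = m (σ j)) ∨ (u = m (σ j) + 1 ∧ v = σ j))

open Finset Relation

theorem _root_.Relation.eqvGen_eq_of_le {α : Type*} {r s : α → α → Prop}
    (hrs : r ≤ EqvGen s) (hsr : s ≤ EqvGen r) : EqvGen r = EqvGen s :=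
  le_antisymm (EqvGen.eqvGen_le hrs) (EqvGen.eqvGen_le hsr)

theorem _root_.Equivalence.eqvGen_or_eq_iff {α : Type*} {r : α → α → Prop}
    (hr : Equivalence r) {x y u v : α} :
    EqvGen (fun a b => r a b ∨ a = x ∧ b = y) u v ↔
      r u v ∨ (r u x ∨ r u y) ∧ (r v x ∨ r v y) := by
  have hf : ∀ {a b}, r a b → (r b x ∨ r b y) → (r a x ∨ r a y) :=
    fun h => Or.imp (hr.trans h) (hr.trans h)
  constructor
  · have hS : Equivalence fun u v => r u v ∨ (r u x ∨ r u y) ∧ (r v x ∨ r v y) := by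
      refine ⟨fun u => Or.inl (hr.refl u), fun h => h.imp hr.symm And.symm, ?_⟩
      rintro u v w (huv | ⟨hu, hv⟩) (hvw | ⟨hv', hw⟩)
      · exact Or.inl (hr.trans huv hvw)
      · exact Or.inr ⟨hf huv hv', hw⟩
      · exact Or.inr ⟨hu, hf (hr.symm hvw) hv⟩
      · exact Or.inr ⟨hu, hw⟩
    refine fun h => hS.eqvGen_iff.1 (EqvGen.mono ?_ _ _ h)
    rintro a b (hab | ⟨rfl, rfl⟩)
    · exact Or.inl hab
    · exact Or.inr ⟨Or.inl (hr.refl a), Or.inr (hr.refl b)⟩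
  · have hxy : EqvGen (fun a b => r a b ∨ a = x ∧ b = y) x y :=
      EqvGen.rel _ _ (Or.inr ⟨rfl, rfl⟩)
    have hx : ∀ a, r a x ∨ r a y → EqvGen (fun a b => r a b ∨ a = x ∧ b = y) a x := by
      rintro a (h | h)
      · exact EqvGen.rel _ _ (Or.inl h)
      · exact EqvGen.trans _ _ _ (EqvGen.rel _ _ (Or.inl h)) (EqvGen.symm _ _ hxy)
    rintro (h | ⟨hu, hv⟩)
    · exact EqvGen.rel _ _ (Or.inl h)
    · exact EqvGen.trans _ _ _ (hx u hu) (EqvGen.symm _ _ (hx v hv))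

section CyclicOrder

variable {k : ℕ}

/-- The number of steps from `e + 1` forward to `z` around `Fin k`; `e` itself is the farthest. -/
def cyclicGap (e z : Fin k) : ℕ := if (e : ℕ) < z then z - e - 1 else k + z - e - 1

/-- `y` is the first element of `R` met when walking forward from `e + 1` around `Fin k`. -/
def IsCyclicSucc (R : Finset (Fin k)) (e y : Fin k) : Prop :=
  y ∈ R ∧ ∀ z ∈ R, cyclicGap e y ≤ cyclicGap e z

theorem cyclicGap_injective (e : Fin k) : Function.Injective (cyclicGap e) := by
  intro z z' h
  unfold cyclicGap at h
  ext
  split_ifs at h <;> omega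

theorem cyclicGap_le_cyclicGap_self (e z : Fin k) : cyclicGap e z ≤ cyclicGap e e := by
  unfold cyclicGap
  split_ifs <;> omega

variable {R : Finset (Fin k)} {a b e w x y z : Fin k}

theorem exists_isCyclicSucc (hR : R.Nonempty) (e : Fin k) : ∃ y, IsCyclicSucc R e y := by
  obtain ⟨y, hy, hmin⟩ := R.exists_min_image (cyclicGap e) hR
  exact ⟨y, hy, hmin⟩

theorem isCyclicSucc_pair (a b : Fin k) : IsCyclicSucc {a, b} a b := by
  refine ⟨by simp, ?_⟩
  simp [cyclicGap_le_cyclicGap_self]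

theorem isCyclicSucc_max'_min' (hR : R.Nonempty) : IsCyclicSucc R (R.max' hR) (R.min' hR) := by
  refine ⟨R.min'_mem hR, fun z hz => ?_⟩
  have := R.min'_le z hz
  have := R.le_max' z hz
  unfold cyclicGap
  split_ifs <;> omega

theorem isCyclicSucc_univ [NeZero k] (e : Fin k) : IsCyclicSucc univ e (e + 1) := by
  refine ⟨mem_univ _, fun z _ => ?_⟩
  suffices cyclicGap e (e + 1) = 0 by omega
  obtain ⟨n, rfl⟩ := Nat.exists_eq_succ_of_ne_zero (NeZero.ne k)
  unfold cyclicGap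
  rw [Fin.val_add_one]
  split_ifs with h1 h2 <;> simp_all [Fin.ext_iff]

namespace IsCyclicSucc

theorem unique (h : IsCyclicSucc R e y) (h' : IsCyclicSucc R e z) : y = z :=
  cyclicGap_injective e (le_antisymm (h.2 z h'.1) (h'.2 y h.1))

theorem eq_of_mem_of_self (h : IsCyclicSucc R e e) (hz : z ∈ R) : z = e :=
  cyclicGap_injective e (le_antisymm (cyclicGap_le_cyclicGap_self e z) (h.2 z hz))

theorem eq_of_succ_eq (ha : a ∈ R) (hb : b ∈ R) (h : IsCyclicSucc R a y)
    (h' : IsCyclicSucc R b y) : a = b := by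
  have h1 := h.2 b hb
  have h2 := h'.2 a ha
  by_contra hne
  have hne' : (a : ℕ) ≠ b := fun h => hne (Fin.ext h)
  unfold cyclicGap at h1 h2
  split_ifs at h1 h2 <;> omega

theorem erase (h : IsCyclicSucc R e y) (hy : y ≠ x) : IsCyclicSucc (R.erase x) e y :=
  ⟨mem_erase.2 ⟨hy, h.1⟩, fun z hz => h.2 z (mem_of_mem_erase hz)⟩

theorem erase_of_succ (h : IsCyclicSucc R e x) (h' : IsCyclicSucc R x y) (hy : y ≠ x) :
    IsCyclicSucc (R.erase x) e y := by
  refine ⟨mem_erase.2 ⟨hy, h'.1⟩, fun z hz => ?_⟩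
  obtain ⟨hzx, hzR⟩ := mem_erase.1 hz
  have h1 := h.2 z hzR
  have h2 := h.2 y h'.1
  have h3 := h'.2 z hzR
  have hzx' : (z : ℕ) ≠ x := fun h => hzx (Fin.ext h)
  have hyx' : (y : ℕ) ≠ x := fun h => hy (Fin.ext h)
  unfold cyclicGap at *
  split_ifs at * <;> omega

theorem subset_pair (hab : IsCyclicSucc R a b) (hba : IsCyclicSucc R b a) (hne : a ≠ b) :
    R ⊆ {a, b} := by
  intro z hz
  by_cases hzb : z = b
  · simp [hzb]
  · simp [(hab.erase_of_succ hba hne).eq_of_mem_of_self (mem_erase.2 ⟨hzb, hz⟩)]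

theorem exists_succ_ne (hR : 2 < R.card) (hab : IsCyclicSucc R a b) (hne : a ≠ b) :
    ∃ w, IsCyclicSucc R b w ∧ w ≠ a ∧ w ≠ b := by
  obtain ⟨w, hw⟩ := exists_isCyclicSucc ⟨b, hab.1⟩ b
  refine ⟨w, hw, ?_, ?_⟩
  · rintro rfl
    have := card_le_card (hab.subset_pair hw hne)
    have := card_le_two (a := w) (b := b)
    omega
  · rintro rfl
    have := card_le_card fun z hz => mem_singleton.2 (hw.eq_of_mem_of_self hz)
    simp at this
    omega

theorem of_erase_pair (h : IsCyclicSucc ((R.erase a).erase b) e y) (ha : a ∈ R) (hne : a ≠ b)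
    (hab : IsCyclicSucc R a b) (hbw : IsCyclicSucc R b w) (hwa : w ≠ a) (hwb : w ≠ b)
    (he : e ∈ R) (hea : e ≠ a) :
    IsCyclicSucc R e y ∨ IsCyclicSucc R e a ∧ y = w := by
  obtain ⟨y₀, hy₀⟩ := exists_isCyclicSucc ⟨e, he⟩ e
  by_cases h₀a : y₀ = a
  · subst h₀a
    refine Or.inr ⟨hy₀, h.unique ?_⟩
    exact (hy₀.erase_of_succ hab hne.symm).erase_of_succ (hbw.erase hwa) hwb
  · have h₀b : y₀ ≠ b := by
      rintro rfl
      exact hea (hy₀.eq_of_succ_eq he ha hab)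
    exact Or.inl (h.unique ((hy₀.erase h₀a).erase h₀b) ▸ hy₀)

end IsCyclicSucc

end CyclicOrder

section Ears

variable {k : ℕ} {m : Fin k → Fin k} {R : Finset (Fin k)}

theorem exists_ear_between (hinv : Function.Involutive m) (hfix : ∀ i, m i ≠ i)
    (hpl : NonCrossing m) (hR : ∀ a ∈ R, m a ∈ R) (a : Fin k) (ha : a ∈ R) (hlt : a < m a) :
    ∃ t ∈ R, a ≤ t ∧ t < m t ∧ m t ≤ m a ∧ IsCyclicSucc R t (m t) := by
  induction hd : (m a : ℕ) - a using Nat.strong_induction_on generalizing a with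
  | _ d ih =>
  obtain ⟨b, hb⟩ := exists_isCyclicSucc ⟨a, ha⟩ a
  by_cases hbm : b = m a
  · exact ⟨a, ha, le_rfl, hlt, le_rfl, hbm ▸ hb⟩
  have hab : a < b ∧ b < m a := by
    have h := hb.2 _ (hR a ha)
    have : (b : ℕ) ≠ m a := fun h => hbm (Fin.ext h)
    unfold cyclicGap at h
    split_ifs at h <;> omega
  have hbmb : b < m b := by
    have h := hb.2 _ (hR b hb.1)
    have h1 : (m b : ℕ) ≠ b := fun h => hfix b (Fin.ext h)
    have h2 : (m b : ℕ) ≠ a := fun h => hbm (by rw [← Fin.ext h, hinv])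
    by_contra hle
    have hlt' : m b < a := by
      unfold cyclicGap at h
      split_ifs at h <;> omega
    refine hpl (m b) a (by rw [hinv]; omega) hlt ⟨hlt', ?_, ?_⟩ <;> rw [hinv]
    exacts [hab.1, hab.2]
  have hmb : m b < m a := by
    refine lt_of_le_of_ne (not_lt.1 fun h => hpl a b hlt hbmb ⟨hab.1, hab.2, h⟩) ?_
    exact fun h => hab.1.ne (hinv.injective h).symm
  obtain ⟨t, ht, hbt, htm, hmt, hear⟩ := ih _ (by omega) b hb.1 hbmb rfl
  exact ⟨t, ht, hab.1.le.trans hbt, htm, hmt.trans hmb.le, hear⟩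

theorem exists_two_ears (hinv : Function.Involutive m) (hfix : ∀ i, m i ≠ i)
    (hpl : NonCrossing m) (hR : ∀ a ∈ R, m a ∈ R) (hne : R.Nonempty) :
    ∃ a ∈ R, ∃ b ∈ R, a ≠ b ∧ IsCyclicSucc R a (m a) ∧ IsCyclicSucc R b (m b) := by
  have ha0 := R.min'_mem hne
  have hz := R.max'_mem hne
  have hlt0 : R.min' hne < m (R.min' hne) :=
    lt_of_le_of_ne (R.min'_le _ (hR _ ha0)) (hfix _).symm
  obtain ⟨t, ht, -, htm, hmt, hear⟩ := exists_ear_between hinv hfix hpl hR _ ha0 hlt0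
  by_cases hza : m (R.max' hne) = R.min' hne
  · refine ⟨t, ht, R.max' hne, hz, ?_, hear, hza ▸ isCyclicSucc_max'_min' hne⟩
    rintro rfl
    rw [← hza, hinv] at hmt
    exact absurd (hmt.trans_lt htm) (lt_irrefl _)
  · have hzlt : m (R.max' hne) < R.max' hne :=
      lt_of_le_of_ne (R.le_max' _ (hR _ hz)) (hfix _)
    obtain ⟨t', ht', hzt', -, -, hear'⟩ :=
      exists_ear_between hinv hfix hpl hR _ (hR _ hz) (by rwa [hinv])
    have h1 : R.min' hne < m (R.max' hne) :=
      lt_of_le_of_ne (R.min'_le _ (hR _ hz)) (Ne.symm hza)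
    have h2 : m (R.min' hne) < R.max' hne :=
      lt_of_le_of_ne (R.le_max' _ (hR _ ha0)) fun h => hza (by rw [← h, hinv])
    have h3 : m (R.min' hne) < m (R.max' hne) := by
      refine lt_of_le_of_ne (not_lt.1 fun h => hpl _ _ hlt0 (by rwa [hinv]) ⟨h1, h, ?_⟩) ?_
      · rwa [hinv]
      · exact fun h => absurd (hlt0.trans (h2.trans_eq (hinv.injective h).symm)) (lt_irrefl _)
    refine ⟨t, ht, t', ht', ?_, hear, hear'⟩
    rintro rfl
    exact absurd (htm.trans_le (hmt.trans (h3.le.trans hzt'))) (lt_irrefl _)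

end Ears

section Transversal

variable {k : ℕ} {m : Fin k → Fin k}

variable (m) in
structure IsTransversal (R : Finset (Fin k)) (L : List (Fin k)) : Prop where
  subset : ∀ a ∈ L, a ∈ R
  cover : ∀ x ∈ R, ∃ a ∈ L, a = x ∨ m a = x
  nodup : L.Nodup
  map_notMem : ∀ a ∈ L, m a ∉ L

theorem isTransversal_empty : IsTransversal m ∅ [] :=
  ⟨by simp, by simp, List.nodup_nil, by simp⟩

theorem IsTransversal.cons {R : Finset (Fin k)} {a : Fin k} {L : List (Fin k)}
    (hL : IsTransversal m ((R.erase a).erase (m a)) L) (hinv : Function.Involutive m)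
    (hfix : ∀ i, m i ≠ i) (ha : a ∈ R) : IsTransversal m R (a :: L) := by
  have hmem : ∀ b ∈ L, b ∈ R ∧ b ≠ a ∧ b ≠ m a := fun b hb => by
    have := hL.subset b hb
    simp only [mem_erase] at this
    tauto
  refine ⟨?_, fun x hx => ?_, ?_, ?_⟩
  · simpa using ⟨ha, fun b hb => (hmem b hb).1⟩
  · by_cases hxa : x = a
    · exact ⟨a, List.mem_cons_self, Or.inl hxa.symm⟩
    by_cases hxma : x = m a
    · exact ⟨a, List.mem_cons_self, Or.inr hxma.symm⟩
    obtain ⟨b, hb, hbx⟩ := hL.cover x (by simp [hxa, hxma, hx])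
    exact ⟨b, List.mem_cons_of_mem a hb, hbx⟩
  · exact List.nodup_cons.2 ⟨fun h => (hmem a h).2.1 rfl, hL.nodup⟩
  · simp only [List.mem_cons, forall_eq_or_imp, not_or]
    refine ⟨⟨hfix a, fun h => (hmem _ h).2.2 rfl⟩,
      fun b hb => ⟨fun h => ?_, hL.map_notMem b hb⟩⟩
    exact (hmem b hb).2.2 (by rw [← h, hinv])

end Transversal

section Gluing

variable {k : ℕ} [NeZero k] {m : Fin k → Fin k}

variable (m) in
/-- Edge `i` joins `i` and `i + 1`; gluing edge `a` to edge `m a` identifies `a + 1 ~ m a` and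
`m a + 1 ~ a`. -/
def glued (E : Fin k → Fin k → Prop) (L : List (Fin k)) : Fin k → Fin k → Prop :=
  EqvGen fun u v => E u v ∨ ∃ a ∈ L, (u = a + 1 ∧ v = m a) ∨ (u = m a + 1 ∧ v = a)

theorem glued_nil {E : Fin k → Fin k → Prop} (hE : Equivalence E) : glued m E [] = E := by
  refine (eqvGen_eq_of_le ?_ fun u v h => EqvGen.rel _ _ (Or.inl h)).trans hE.eqvGen_eq
  rintro u v (h | ⟨a, ha, -⟩)
  · exact EqvGen.rel _ _ h
  · simp at ha

theorem glued_cons (E : Fin k → Fin k → Prop) (a : Fin k) (L : List (Fin k)) :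
    glued m E (a :: L) = glued m (glued m E [a]) L := by
  refine eqvGen_eq_of_le ?_ ?_
  · rintro u v (h | ⟨b, hb, hp⟩)
    · exact EqvGen.rel _ _ (Or.inl (EqvGen.rel _ _ (Or.inl h)))
    · rcases List.mem_cons.1 hb with rfl | hb
      · exact EqvGen.rel _ _ (Or.inl (EqvGen.rel _ _ (Or.inr ⟨b, by simp, hp⟩)))
      · exact EqvGen.rel _ _ (Or.inr ⟨b, hb, hp⟩)
  · rintro u v (h | ⟨b, hb, hp⟩)
    · refine EqvGen.mono (fun u v h => ?_) _ _ h
      rcases h with h | ⟨b, hb, hp⟩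
      · exact Or.inl h
      · exact Or.inr ⟨b, by simp_all, hp⟩
    · exact EqvGen.rel _ _ (Or.inr ⟨b, List.mem_cons_of_mem a hb, hp⟩)

/-- When `a + 1 ~ m a` already holds, gluing `a` merges the classes of `m a + 1` and `a`. -/
theorem glued_singleton_iff {E : Fin k → Fin k → Prop} (hE : Equivalence E) {a u v : Fin k}
    (h : E (a + 1) (m a)) :
    glued m E [a] u v ↔ E u v ∨ (E u (m a + 1) ∨ E u a) ∧ (E v (m a + 1) ∨ E v a) := by
  rw [← hE.eqvGen_or_eq_iff, glued]
  refine iff_of_eq (congrFun (congrFun (eqvGen_eq_of_le ?_ ?_) u) v)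
  · rintro u v (h' | ⟨b, hb, ⟨hu, hv⟩ | huv⟩)
    · exact EqvGen.rel _ _ (Or.inl h')
    · rw [List.mem_singleton.1 hb] at hu hv
      exact EqvGen.rel _ _ (Or.inl (hu ▸ hv ▸ h))
    · rw [List.mem_singleton.1 hb] at huv
      exact EqvGen.rel _ _ (Or.inr huv)
  · rintro u v (h' | huv)
    · exact EqvGen.rel _ _ (Or.inl h')
    · exact EqvGen.rel _ _ (Or.inr ⟨a, List.mem_singleton_self a, Or.inr huv⟩)

variable (m) in
/-- `R` is the set of edges not glued yet and `E` the identification made so far: the edges of `R`,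
in cyclic order, form a cycle of the quotient by `E` (their initial vertices stay distinct and each
ends where the next begins), and this cycle passes through `c0`. -/
structure IsActiveCycle (c0 : Fin k) (R : Finset (Fin k)) (E : Fin k → Fin k → Prop) :
    Prop where
  equivalence : Equivalence E
  map_mem : ∀ a ∈ R, m a ∈ R
  eq_of_rel : ∀ e ∈ R, ∀ e' ∈ R, E e e' → e = e'
  rel_succ : ∀ e ∈ R, ∀ y, IsCyclicSucc R e y → E y (e + 1)
  active : ∃ e ∈ R, E c0 e

theorem isActiveCycle_univ (c0 : Fin k) : IsActiveCycle m c0 univ Eq :=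
  ⟨eq_equivalence, fun _ _ => mem_univ _, fun _ _ _ _ h => h,
    fun e _ _ hy => hy.unique (isCyclicSucc_univ e), ⟨c0, mem_univ _, rfl⟩⟩

namespace IsActiveCycle

variable {c0 a : Fin k} {R : Finset (Fin k)} {E : Fin k → Fin k → Prop}

theorem card_erase_erase (hC : IsActiveCycle m c0 R E) (hfix : ∀ i, m i ≠ i) (ha : a ∈ R) :
    ((R.erase a).erase (m a)).card + 2 = R.card := by
  have := card_erase_add_one (mem_erase.2 ⟨hfix a, hC.map_mem a ha⟩)
  have := card_erase_add_one ha
  omega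

theorem rel_ear (hC : IsActiveCycle m c0 R E) (ha : a ∈ R) (hear : IsCyclicSucc R a (m a)) :
    E (a + 1) (m a) :=
  hC.equivalence.symm (hC.rel_succ a ha _ hear)

theorem not_rel_ear (hC : IsActiveCycle m c0 R E) (hfix : ∀ i, m i ≠ i) (hR : 2 < R.card)
    (ha : a ∈ R) (hear : IsCyclicSucc R a (m a)) : ¬E a (m a + 1) := by
  intro h
  obtain ⟨w, hw, hwa, -⟩ := hear.exists_succ_ne hR (hfix a).symm
  have hw' := hC.rel_succ _ (hC.map_mem a ha) _ hw
  exact hwa (hC.eq_of_rel _ hw.1 _ ha (hC.equivalence.trans hw' (hC.equivalence.symm h)))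

/-- Of two distinct ears, at most one has its shared vertex in the class of `c0`. -/
theorem exists_ear (hC : IsActiveCycle m c0 R E) (hinv : Function.Involutive m)
    (hfix : ∀ i, m i ≠ i) (hpl : NonCrossing m) (hne : R.Nonempty) :
    ∃ a ∈ R, IsCyclicSucc R a (m a) ∧ ¬E c0 (m a) := by
  obtain ⟨a, ha, b, hb, hab, hea, heb⟩ := exists_two_ears hinv hfix hpl hC.map_mem hne
  by_cases hc : E c0 (m a)
  · refine ⟨b, hb, heb, fun hc' => hab (hinv.injective ?_)⟩
    exact hC.eq_of_rel _ (hC.map_mem a ha) _ (hC.map_mem b hb)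
      (hC.equivalence.trans (hC.equivalence.symm hc) hc')
  · exact ⟨a, ha, hea, hc⟩

theorem glue_ear (hC : IsActiveCycle m c0 R E) (hinv : Function.Involutive m)
    (hfix : ∀ i, m i ≠ i) (hR : 2 < R.card) (ha : a ∈ R) (hear : IsCyclicSucc R a (m a))
    (hc0 : ¬E c0 (m a)) : IsActiveCycle m c0 ((R.erase a).erase (m a)) (glued m E [a]) := by
  have hE := hC.equivalence
  have hma := hC.map_mem a ha
  obtain ⟨w, hw, hwa, hwma⟩ := hear.exists_succ_ne hR (hfix a).symm
  have hwE : E w (m a + 1) := hC.rel_succ _ hma _ hw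
  have hmem : ∀ x, x ∈ (R.erase a).erase (m a) ↔ x ∈ R ∧ x ≠ a ∧ x ≠ m a := by
    intro x
    simp only [mem_erase]
    tauto
  have hiff := fun u v => glued_singleton_iff hE (u := u) (v := v) (hC.rel_ear ha hear)
  have hclass : ∀ e ∈ R, e ≠ a → E e (m a + 1) ∨ E e a → e = w := by
    rintro e he hea (h | h)
    · exact hC.eq_of_rel _ he _ hw.1 (hE.trans h (hE.symm hwE))
    · exact absurd (hC.eq_of_rel _ he _ ha h) hea
  refine ⟨EqvGen.is_equivalence _, fun x hx => ?_, fun e he e' he' h => ?_,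
    fun e he y hy => ?_, ?_⟩
  · obtain ⟨hx, hxa, hxma⟩ := (hmem x).1 hx
    refine (hmem _).2 ⟨hC.map_mem x hx, fun h => hxma ?_, fun h => hxa (hinv.injective h)⟩
    rw [← h, hinv]
  · obtain ⟨he, hea, -⟩ := (hmem e).1 he
    obtain ⟨he', hea', -⟩ := (hmem e').1 he'
    rcases (hiff e e').1 h with h | ⟨h, h'⟩
    · exact hC.eq_of_rel _ he _ he' h
    · exact (hclass e he hea h).trans (hclass e' he' hea' h').symm
  · obtain ⟨he, hea, -⟩ := (hmem e).1 he
    rcases hy.of_erase_pair ha (hfix a).symm hear hw hwa hwma he hea with h | ⟨h, rfl⟩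
    · exact EqvGen.rel _ _ (Or.inl (hC.rel_succ e he _ h))
    · exact (hiff _ _).2 (Or.inr ⟨Or.inl hwE, Or.inr (hE.symm (hC.rel_succ e he a h))⟩)
  · obtain ⟨e, he, hce⟩ := hC.active
    by_cases hea : e = a
    · subst hea
      refine ⟨w, (hmem w).2 ⟨hw.1, hwa, hwma⟩, (hiff c0 w).2 ?_⟩
      exact Or.inr ⟨Or.inr hce, Or.inl hwE⟩
    · exact ⟨e, (hmem e).2 ⟨he, hea, fun h => hc0 (h ▸ hce)⟩, (hiff _ _).2 (Or.inl hce)⟩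

end IsActiveCycle

variable (m) in
def IsGoodOrder (c0 : Fin k) (E : Fin k → Fin k → Prop) (L : List (Fin k)) : Prop :=
  ∀ j (hj : j < L.length),
    (j + 1 < L.length →
      Xor (glued m E (L.take j) L[j] (m L[j] + 1)) (glued m E (L.take j) (L[j] + 1) (m L[j]))) ∧
    (j + 1 = L.length →
      glued m E (L.take j) L[j] (m L[j] + 1) ∧ glued m E (L.take j) (L[j] + 1) (m L[j]) ∧
        (glued m E (L.take j) c0 L[j] ∨ glued m E (L.take j) c0 (L[j] + 1)))

theorem isGoodOrder_singleton {c0 a : Fin k} {E : Fin k → Fin k → Prop} (hE : Equivalence E)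
    (h₁ : E a (m a + 1)) (h₂ : E (a + 1) (m a)) (h₃ : E c0 a ∨ E c0 (a + 1)) :
    IsGoodOrder m c0 E [a] := by
  intro j hj
  obtain rfl : j = 0 := by simpa using hj
  simp [glued_nil hE, h₁, h₂, h₃]

theorem IsGoodOrder.cons {c0 a : Fin k} {E : Fin k → Fin k → Prop} {L : List (Fin k)}
    (hL : IsGoodOrder m c0 (glued m E [a]) L) (hE : Equivalence E) (hne : L ≠ [])
    (ha : Xor (E a (m a + 1)) (E (a + 1) (m a))) : IsGoodOrder m c0 E (a :: L) := by
  rintro (_ | j) hj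
  · have := List.length_pos_iff.2 hne
    simp only [List.take_zero, glued_nil hE, List.getElem_cons_zero, List.length_cons]
    exact ⟨fun _ => ha, by omega⟩
  · simp only [List.take_succ_cons, List.getElem_cons_succ, List.length_cons]
    rw [glued_cons]
    simpa using hL j (by simpa using hj)

theorem exists_gluing_order {c0 : Fin k} (hinv : Function.Involutive m) (hfix : ∀ i, m i ≠ i)
    (hpl : NonCrossing m) (n : ℕ) :
    ∀ {R : Finset (Fin k)} {E : Fin k → Fin k → Prop}, R.card = 2 * (n + 1) →
      IsActiveCycle m c0 R E →
      ∃ L : List (Fin k), L.length = n + 1 ∧ IsTransversal m R L ∧ IsGoodOrder m c0 E L := by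
  induction n with
  | zero =>
    intro R E hR hC
    obtain ⟨a, b, hab, rfl⟩ := card_eq_two.1 hR
    have hmab : m a = b := by
      have := hC.map_mem a (by simp)
      simp only [mem_insert, mem_singleton] at this
      exact this.resolve_left (hfix a)
    subst hmab
    have h₁ := hC.rel_succ _ (by simp) a (pair_comm a (m a) ▸ isCyclicSucc_pair (m a) a)
    have h₂ := hC.rel_ear (by simp) (isCyclicSucc_pair a (m a))
    have h₃ : E c0 a ∨ E c0 (a + 1) := by
      obtain ⟨e, he, hce⟩ := hC.active
      rcases mem_insert.1 he with rfl | he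
      · exact Or.inl hce
      · exact Or.inr (hC.equivalence.trans (mem_singleton.1 he ▸ hce) (hC.equivalence.symm h₂))
    have hR' := hC.card_erase_erase hfix (a := a) (by simp)
    refine ⟨[a], rfl, IsTransversal.cons ?_ hinv hfix (by simp),
      isGoodOrder_singleton hC.equivalence h₁ h₂ h₃⟩
    have h₀ : (({a, m a} : Finset (Fin k)).erase a).erase (m a) = ∅ :=
      card_eq_zero.1 (by omega)
    exact h₀ ▸ isTransversal_empty
  | succ n ih =>
    intro R E hR hC
    obtain ⟨a, ha, hear, hc0⟩ := hC.exists_ear hinv hfix hpl (card_pos.1 (by omega))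
    have hR' := hC.card_erase_erase hfix ha
    obtain ⟨L, hlen, hT, hG⟩ := ih (by omega) (hC.glue_ear hinv hfix (by omega) ha hear hc0)
    refine ⟨a :: L, by simp [hlen], hT.cons hinv hfix ha, hG.cons hC.equivalence ?_ ?_⟩
    · rintro rfl
      simp at hlen
    · exact Or.inr ⟨hC.rel_ear ha hear, hC.not_rel_ear hfix (by omega) ha hear⟩

theorem partEqv_eq_glued (L : List (Fin k)) (hL : L.length = k / 2) (K : ℕ) :
    partEqv m (fun j => L.get (j.cast hL.symm)) K = glued m Eq (L.take K) := by
  refine eqvGen_eq_of_le ?_ ?_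
  · rintro u v ⟨j, hj, hp⟩
    refine EqvGen.rel _ _ (Or.inr ⟨_, List.mem_take_iff_getElem.2 ⟨j, ?_, rfl⟩, hp⟩)
    have := j.2
    omega
  · rintro u v (rfl | ⟨a, ha, hp⟩)
    · exact EqvGen.refl _
    · obtain ⟨j, hj, rfl⟩ := List.mem_take_iff_getElem.1 ha
      exact EqvGen.rel _ _ ⟨⟨j, hL ▸ (Nat.lt_min.1 hj).2⟩, (Nat.lt_min.1 hj).1, hp⟩

end Gluing

/-- for a complete planar matching of the edges of a cycle and any
vertex `c0`, the matched pairs can be ordered so that each identification, at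
the moment it is performed, glues two edges sharing exactly one endpoint --
except the last one, which glues two edges sharing both endpoints, one of them
being (the image of) `c0`. -/
theorem stmt5 (k : ℕ) [NeZero k] (hk : Even k)
    (m : Fin k → Fin k) (hinv : Function.Involutive m) (hfix : ∀ i, m i ≠ i)
    (hpl : NonCrossing m) (c0 : Fin k) :
    ∃ σ : Fin (k / 2) → Fin k,
      (∀ x : Fin k, ∃ j, σ j = x ∨ m (σ j) = x) ∧
      (∀ j j', σ j = σ j' ∨ σ j = m (σ j') → j = j') ∧
      (∀ j : Fin (k / 2), (j : ℕ) + 1 < k / 2 →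
        Xor' (partEqv m σ (j : ℕ) (σ j) (m (σ j) + 1))
             (partEqv m σ (j : ℕ) (σ j + 1) (m (σ j)))) ∧
      (∀ j : Fin (k / 2), (j : ℕ) + 1 = k / 2 →
        partEqv m σ (j : ℕ) (σ j) (m (σ j) + 1) ∧
        partEqv m σ (j : ℕ) (σ j + 1) (m (σ j)) ∧
        (partEqv m σ (j : ℕ) c0 (σ j) ∨ partEqv m σ (j : ℕ) c0 (σ j + 1))) := by
  have hk2 : k = 2 * (k / 2) := by
    obtain ⟨r, hr⟩ := hk
    omega
  obtain ⟨n, hn⟩ : ∃ n, k / 2 = n + 1 := ⟨k / 2 - 1, by have := NeZero.ne k; omega⟩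
  obtain ⟨L, hlen, hT, hG⟩ := exists_gluing_order hinv hfix hpl n
    (by rw [card_univ, Fintype.card_fin]; omega) (isActiveCycle_univ c0)
  have hL : L.length = k / 2 := by omega
  refine ⟨fun j => L.get (j.cast hL.symm), fun x => ?_, fun j j' h => ?_, fun j hj => ?_,
    fun j hj => ?_⟩
  · obtain ⟨a, ha, hax⟩ := hT.cover x (mem_univ x)
    obtain ⟨i, rfl⟩ := List.mem_iff_get.1 ha
    exact ⟨i.cast hL, hax⟩
  · rcases h with h | h
    · simpa using hT.nodup.get_inj_iff.1 h
    · refine absurd ?_ (hT.map_notMem _ (List.get_mem L (j'.cast hL.symm)))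
      exact h ▸ List.get_mem L (j.cast hL.symm)
  · rw [partEqv_eq_glued L hL]
    exact (hG j (by omega)).1 (by omega)
  · rw [partEqv_eq_glued L hL]
    exact (hG j (by omega)).2 (by omega)

end MogamiPaper
end

section
/- Let A, B, C be d-pseudomanifolds with A ∪ B = C, and suppose A ∩ B is pure (d-1)-dimensional and connected. If A and B are both Mogami, then C is Mogami. -/
open Finset

namespace MogamiPaper

/-- A configuration of `N` labelled `d`-simplices with vertices in `V`:
facet `i` has vertex list `f i`. Vertex identifications (gluings) are recorded
by the labelling map. -/
abbrev Config (V : Type*) (d N : ℕ) := Fin N → Fin (d + 1) → V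

variable {V : Type*} [DecidableEq V] {d N : ℕ}

/-- the vertex set of the `i`-th facet -/
def facet (f : Config V d N) (i : Fin N) : Finset V :=
  Finset.image (f i) Finset.univ

/-- each facet has `d+1` distinct vertices -/
def Proper (f : Config V d N) : Prop := ∀ i, Function.Injective (f i)

/-- the facets containing a given set of vertices -/
def cells (f : Config V d N) (R : Finset V) : Finset (Fin N) :=
  Finset.univ.filter fun i => R ⊆ facet f i

/-- pseudomanifold: proper, and every `(d-1)`-face lies in at most two facets -/
def IsPseudo (f : Config V d N) : Prop :=
  Proper f ∧ ∀ R : Finset V, R.card = d → (cells f R).card ≤ 2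

/-- a boundary `(d-1)`-face: contained in exactly one facet -/
def IsBdryRidge (f : Config V d N) (R : Finset V) : Prop :=
  R.card = d ∧ (cells f R).card = 1

/-- A gluing step: identify two distinct boundary `(d-1)`-faces `R`, `S`, whose
intersection cardinality satisfies `P`, via a vertex identification `φ` that maps
`R` bijectively onto `S` and fixes everything outside `R`. -/
def Step (P : ℕ → Prop) (f g : Config V d N) : Prop :=
  ∃ R S : Finset V, IsBdryRidge f R ∧ IsBdryRidge f S ∧ R ≠ S ∧ P ((R ∩ S).card) ∧
    ∃ φ : V → V, (∀ v, v ∉ R → φ v = v) ∧ Set.InjOn φ ↑R ∧ R.image φ = S ∧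
      ∀ i j, g i j = φ (f i j)

/-- Mogami gluing: the glued boundary facets share at least a vertex -/
def MogamiStep (f g : Config V d N) : Prop := Step (fun c => 1 ≤ c) f g

/-- LC gluing: the glued boundary facets share a `(d-2)`-face -/
def LCStep (f g : Config V d N) : Prop := Step (fun c => c = d - 1) f g

/-- the dual graph: two facets are adjacent if they share a `(d-1)`-face -/
def dualGraph (f : Config V d N) : SimpleGraph (Fin N) :=
  SimpleGraph.fromRel fun i i' =>
    ∃ R : Finset V, R.card = d ∧ R ⊆ facet f i ∧ R ⊆ facet f i'

/-- UNITE: glue two disjoint boundary facets belonging to (dually) disconnected parts -/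
def UniteStep (f g : Config V d N) : Prop :=
  ∃ R S : Finset V, IsBdryRidge f R ∧ IsBdryRidge f S ∧ Disjoint R S ∧
    (∀ i ∈ cells f R, ∀ i' ∈ cells f S, ¬ (dualGraph f).Reachable i i') ∧
    ∃ φ : V → V, (∀ v, v ∉ R → φ v = v) ∧ Set.InjOn φ ↑R ∧ R.image φ = S ∧
      ∀ i j, g i j = φ (f i j)

/-- the canonical configuration of `N` pairwise disjoint `d`-simplices -/
def std (d N : ℕ) : Config (Fin N × Fin (d + 1)) d N := fun i j => (i, j)

/-- a tree of `d`-simplices (over the canonical vertex pool): obtained from `N`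
disjoint simplices by UNITE steps, with connected (hence tree) dual graph -/
def IsTreeOfSimplicesC (t : Config (Fin N × Fin (d + 1)) d N) : Prop :=
  Relation.ReflTransGen UniteStep (std d N) t ∧ (dualGraph t).Connected

/-- `g` represents `f` up to an injective relabeling of the used vertices -/
def Represents (g : Config (Fin N × Fin (d + 1)) d N) (f : Config V d N) : Prop :=
  ∃ e : Fin N × Fin (d + 1) → V,
    Set.InjOn e {x | ∃ i j, g i j = x} ∧ ∀ i j, f i j = e (g i j)

/-- Mogami: obtainable from a tree of `d`-simplices by Mogami gluings -/
def IsMogami (f : Config V d N) : Prop :=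
  ∃ t g : Config (Fin N × Fin (d + 1)) d N,
    IsTreeOfSimplicesC t ∧ Relation.ReflTransGen MogamiStep t g ∧ Represents g f

/-- locally constructible: obtainable from a tree of `d`-simplices by LC gluings -/
def IsLC (f : Config V d N) : Prop :=
  ∃ t g : Config (Fin N × Fin (d + 1)) d N,
    IsTreeOfSimplicesC t ∧ Relation.ReflTransGen LCStep t g ∧ Represents g f

/-- the geometric realization, as a subspace of `V → ℝ` -/
def realization [Fintype V] (f : Config V d N) : Set (V → ℝ) :=
  {x | (∀ v, 0 ≤ x v) ∧ (∑ v, x v) = 1 ∧ ∃ i : Fin N, ∀ v, x v ≠ 0 → v ∈ facet f i}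

/-- a triangulated `d`-ball: realization homeomorphic to the unit ball of `ℝ^d` -/
def IsBall [Fintype V] (f : Config V d N) : Prop :=
  Nonempty ((realization f) ≃ₜ
    (Metric.closedBall (0 : EuclideanSpace ℝ (Fin d)) 1 : Set (EuclideanSpace ℝ (Fin d))))

/-- all vertices lie on the boundary -/
def NoInteriorVertices (f : Config V d N) : Prop :=
  ∀ i j, ∃ R : Finset V, IsBdryRidge f R ∧ f i j ∈ R

/-- the cone over a configuration, with apex `v` -/
def cone (f : Config V d N) (v : V) : Config V (d + 1) N :=
  fun i => Fin.cons v (f i)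

end MogamiPaper

namespace MogamiPaper

/-- the disjoint-index union `A ∪ B` of two configurations -/
def union {V : Type*} {d N₁ N₂ : ℕ}
    (f : Config V d N₁) (g : Config V d N₂) : Config V d (N₁ + N₂) :=
  fun i => Fin.addCases (motive := fun _ => Fin (d + 1) → V) f g i

/-- the `(d-1)`-dimensional faces common to both complexes -/
def interFacets {V : Type*} [DecidableEq V] {d N₁ N₂ : ℕ}
    (f : Config V d N₁) (g : Config V d N₂) : Set (Finset V) :=
  {R | R.card = d ∧ (∃ i, R ⊆ facet f i) ∧ (∃ j, R ⊆ facet g j)}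

/-!
Write `A` and `B` as trees of simplices followed by chains of Mogami gluings, and pick a common
ridge `F₀`. Pulling the copies of `F₀` back through the two chains gives boundary ridges of the two
trees; gluing the trees along them is a UNITE step, so the result is a tree of simplices. Both
chains can be replayed on it, because neither ever glues the pulled-back ridge. It remains to
identify the two copies of every other common ridge. Since `A ∩ B` is connected, the common ridges
can be taken in an order in which each one meets an earlier one; the two copies of the next ridge
then already share a vertex, so identifying them is a Mogami gluing. Purity of `A ∩ B` ensures
that at the end two vertices are identified exactly when they carry the same label in `C`.
-/

section Configurations

variable {X Y : Type*} {d N M : ℕ}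

def relabel (θ : X → Y) (c : Config X d N) : Config Y d N := fun i j => θ (c i j)

def usedVerts (c : Config X d N) : Set X := {x | ∃ i j, c i j = x}

lemma relabel_relabel {Z : Type*} (θ : Y → Z) (φ : X → Y) (c : Config X d N) :
    relabel θ (relabel φ c) = relabel (θ ∘ φ) c := rfl

lemma usedVerts_relabel (θ : X → Y) (c : Config X d N) :
    usedVerts (relabel θ c) = θ '' usedVerts c := by
  ext y
  simp [usedVerts, relabel]

lemma Proper.of_relabel {θ : X → Y} {c : Config X d N} (h : Proper (relabel θ c)) : Proper c :=
  fun i _ _ hj => h i (congrArg θ hj)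

@[simp] lemma union_castAdd (a : Config X d N) (b : Config X d M) (i : Fin N) :
    union a b (Fin.castAdd M i) = a i := by
  simp [union]

@[simp] lemma union_natAdd (a : Config X d N) (b : Config X d M) (i : Fin M) :
    union a b (Fin.natAdd N i) = b i := by
  simp [union]

lemma relabel_union (θ : X → Y) (a : Config X d N) (b : Config X d M) :
    relabel θ (union a b) = union (relabel θ a) (relabel θ b) := by
  funext i j
  induction i using Fin.addCases <;> simp [relabel]

lemma usedVerts_union (a : Config X d N) (b : Config X d M) :
    usedVerts (union a b) = usedVerts a ∪ usedVerts b := by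
  ext x
  constructor
  · rintro ⟨i, j, rfl⟩
    induction i using Fin.addCases with
    | left i => exact Or.inl ⟨i, j, by simp⟩
    | right i => exact Or.inr ⟨i, j, by simp⟩
  · rintro (⟨i, j, rfl⟩ | ⟨i, j, rfl⟩)
    · exact ⟨Fin.castAdd M i, j, by simp⟩
    · exact ⟨Fin.natAdd N i, j, by simp⟩

lemma union_comp_finAddFlip (a : Config X d N) (b : Config X d M) :
    union a b ∘ finAddFlip = union b a := by
  funext i
  induction i using Fin.addCases <;> simp

lemma Proper.union_left {a : Config X d N} {b : Config X d M} (h : Proper (union a b)) :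
    Proper a := fun i => by simpa using h (Fin.castAdd M i)

lemma Proper.union_right {a : Config X d N} {b : Config X d M} (h : Proper (union a b)) :
    Proper b := fun i => by simpa using h (Fin.natAdd N i)

lemma usedVerts_subset_of_reflTransGen {r : Config X d N → Config X d N → Prop}
    (hr : ∀ a c, r a c → usedVerts c ⊆ usedVerts a) {a e : Config X d N}
    (h : Relation.ReflTransGen r a e) : usedVerts e ⊆ usedVerts a := by
  induction h with
  | refl => exact subset_rfl
  | tail _ hs ih => exact (hr _ _ hs).trans ih

lemma relabel_eq_self_of_disjoint {a : Config X d N} {R : Set X} {φ : X → X}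
    (hφ : ∀ v, v ∉ R → φ v = v) (hR : Disjoint R (usedVerts a)) : relabel φ a = a :=
  funext₂ fun i j => hφ _ fun h => Set.disjoint_left.1 hR h ⟨i, j, rfl⟩

lemma finset_image_subset_image_iff [DecidableEq Y] {θ : X → Y} {U : Set X}
    (hθ : Set.InjOn θ U) {R T : Finset X} (hR : ↑R ⊆ U) (hT : ↑T ⊆ U) :
    R.image θ ⊆ T.image θ ↔ R ⊆ T := by
  rw [← Finset.coe_subset, Finset.coe_image, Finset.coe_image, hθ.image_subset_image_iff hR hT,
    Finset.coe_subset]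

variable [DecidableEq X] [DecidableEq Y]

lemma mem_facet {c : Config X d N} {i : Fin N} {x : X} : x ∈ facet c i ↔ ∃ j, c i j = x := by
  simp [facet]

lemma mem_usedVerts {c : Config X d N} {x : X} : x ∈ usedVerts c ↔ ∃ i, x ∈ facet c i := by
  simp [usedVerts, mem_facet]

lemma facet_subset_usedVerts (c : Config X d N) (i : Fin N) : ↑(facet c i) ⊆ usedVerts c :=
  fun _ hx => mem_usedVerts.2 ⟨i, hx⟩

lemma mem_cells {c : Config X d N} {R : Finset X} {i : Fin N} :
    i ∈ cells c R ↔ R ⊆ facet c i := by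
  simp [cells]

lemma facet_relabel (θ : X → Y) (c : Config X d N) (i : Fin N) :
    facet (relabel θ c) i = (facet c i).image θ := by
  simp only [facet, Finset.image_image]
  rfl

lemma cells_subset_cells_relabel (θ : X → Y) (c : Config X d N) (R : Finset X) :
    cells c R ⊆ cells (relabel θ c) (R.image θ) := fun i hi => by
  rw [mem_cells, facet_relabel]
  exact Finset.image_subset_image (mem_cells.1 hi)

lemma cells_relabel {θ : X → Y} {c : Config X d N} (hθ : Set.InjOn θ (usedVerts c))
    {R : Finset X} (hR : ↑R ⊆ usedVerts c) : cells (relabel θ c) (R.image θ) = cells c R := by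
  ext i
  rw [mem_cells, mem_cells, facet_relabel,
    finset_image_subset_image_iff hθ hR (facet_subset_usedVerts c i)]

lemma IsBdryRidge.exists_subset_facet {c : Config X d N} {R : Finset X} (h : IsBdryRidge c R) :
    ∃ i, R ⊆ facet c i := by
  obtain ⟨i, hi⟩ := Finset.card_eq_one.1 h.2
  exact ⟨i, mem_cells.1 (hi ▸ Finset.mem_singleton_self i)⟩

lemma IsBdryRidge.subset_usedVerts {c : Config X d N} {R : Finset X} (h : IsBdryRidge c R) :
    ↑R ⊆ usedVerts c := by
  obtain ⟨i, hi⟩ := h.exists_subset_facet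
  exact (Finset.coe_subset.2 hi).trans (facet_subset_usedVerts c i)

lemma IsBdryRidge.nonempty {c : Config X d N} {R : Finset X} (h : IsBdryRidge c R) (hd : 0 < d) :
    R.Nonempty :=
  Finset.card_pos.1 (h.1 ▸ hd)

lemma IsBdryRidge.map {θ : X → Y} {c : Config X d N} (hθ : Set.InjOn θ (usedVerts c))
    {R : Finset X} (h : IsBdryRidge c R) : IsBdryRidge (relabel θ c) (R.image θ) := by
  refine ⟨?_, ?_⟩
  · rw [Finset.card_image_of_injOn (hθ.mono h.subset_usedVerts), h.1]
  · rw [cells_relabel hθ h.subset_usedVerts, h.2]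

@[simp] lemma facet_union_castAdd (a : Config X d N) (b : Config X d M) (i : Fin N) :
    facet (union a b) (Fin.castAdd M i) = facet a i := by
  simp [facet]

@[simp] lemma facet_union_natAdd (a : Config X d N) (b : Config X d M) (i : Fin M) :
    facet (union a b) (Fin.natAdd N i) = facet b i := by
  simp [facet]

lemma card_cells_union (a : Config X d N) (b : Config X d M) (R : Finset X) :
    (cells (union a b) R).card = (cells a R).card + (cells b R).card := by
  simp only [cells, Finset.card_filter, Fin.sum_univ_add, facet_union_castAdd, facet_union_natAdd]

lemma cells_eq_empty {c : Config X d N} {R : Finset X} (h : ∀ i, ¬ R ⊆ facet c i) :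
    cells c R = ∅ :=
  Finset.eq_empty_of_forall_notMem fun i hi => h i (mem_cells.1 hi)

lemma IsBdryRidge.union_left {a : Config X d N} {b : Config X d M} {R : Finset X}
    (h : IsBdryRidge a R) (hb : ∀ j, ¬ R ⊆ facet b j) : IsBdryRidge (union a b) R :=
  ⟨h.1, by rw [card_cells_union, h.2, cells_eq_empty hb, Finset.card_empty]⟩

lemma IsBdryRidge.union_right {a : Config X d N} {b : Config X d M} {R : Finset X}
    (h : IsBdryRidge b R) (ha : ∀ i, ¬ R ⊆ facet a i) : IsBdryRidge (union a b) R :=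
  ⟨h.1, by rw [card_cells_union, h.2, cells_eq_empty ha, Finset.card_empty]⟩

lemma not_subset_facet_of_disjoint {a : Config X d N} {b : Config X d M} {R : Finset X}
    (hR : R.Nonempty) (hRa : ↑R ⊆ usedVerts a) (hab : Disjoint (usedVerts a) (usedVerts b))
    (j : Fin M) : ¬ R ⊆ facet b j := fun hRb =>
  Set.disjoint_left.1 hab (hRa hR.choose_spec) (facet_subset_usedVerts b j (hRb hR.choose_spec))

end Configurations

section Transport

variable {X Y : Type*} {d N : ℕ}

/-- Sends `θ x` to `ξ x` for `x ∈ U` (meaningful when `θ` is injective on `U`) and fixes every point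
outside `θ '' U`. -/
noncomputable def transport (θ ξ : X → Y) (U : Set X) : Y → Y :=
  Function.extend (fun x : U => θ x) (fun x : U => ξ x) id

lemma transport_apply {θ : X → Y} (ξ : X → Y) {U : Set X} (hθ : Set.InjOn θ U) {x : X}
    (hx : x ∈ U) : transport θ ξ U (θ x) = ξ x :=
  hθ.injective.extend_apply (fun x : U => ξ x) id ⟨x, hx⟩

lemma transport_of_notMem {θ : X → Y} (ξ : X → Y) {U : Set X} {y : Y} (hy : y ∉ θ '' U) :
    transport θ ξ U y = y :=
  Function.extend_apply' _ _ _ fun ⟨⟨x, hx⟩, hxy⟩ => hy ⟨x, hx, hxy⟩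

lemma transport_self {θ : X → Y} {U : Set X} (hθ : Set.InjOn θ U) : transport θ θ U = id := by
  funext y
  by_cases hy : y ∈ θ '' U
  · obtain ⟨x, hx, rfl⟩ := hy
    exact transport_apply θ hθ hx
  · exact transport_of_notMem θ hy

lemma relabel_transport {θ : X → Y} (ξ : X → Y) {U : Set X} (hθ : Set.InjOn θ U)
    {c : Config X d N} (hc : usedVerts c ⊆ U) :
    relabel (transport θ ξ U) (relabel θ c) = relabel ξ c :=
  funext₂ fun i j => transport_apply ξ hθ (hc ⟨i, j, rfl⟩)

lemma transport_comp {θ : X → Y} {U U' : Set X} (hθ : Set.InjOn θ U) (hU : U' ⊆ U)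
    {φ : X → X} (hφ : Set.MapsTo φ U U') (ξ : X → Y) :
    transport θ ξ U' ∘ transport θ (θ ∘ φ) U = transport θ (ξ ∘ φ) U := by
  funext y
  by_cases hy : y ∈ θ '' U
  · obtain ⟨x, hx, rfl⟩ := hy
    simp only [Function.comp_apply, transport_apply _ hθ hx, transport_apply ξ (hθ.mono hU) (hφ hx)]
  · have hy' : y ∉ θ '' U' := fun h => hy (Set.image_mono hU h)
    simp only [Function.comp_apply, transport_of_notMem _ hy, transport_of_notMem _ hy']

end Transport

section Gluings

variable {X : Type*} [DecidableEq X] {d N M : ℕ}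

structure IsRidgeMap (R S : Finset X) (φ : X → X) : Prop where
  fix : ∀ v, v ∉ R → φ v = v
  injOn : Set.InjOn φ ↑R
  image_eq : R.image φ = S

structure IsGluing (P : ℕ → Prop) (a : Config X d N) (R S : Finset X) (φ : X → X) : Prop where
  source : IsBdryRidge a R
  target : IsBdryRidge a S
  ne : R ≠ S
  cond : P (R ∩ S).card
  ridgeMap : IsRidgeMap R S φ

lemma step_iff {P : ℕ → Prop} {a c : Config X d N} :
    Step P a c ↔ ∃ R S φ, IsGluing P a R S φ ∧ c = relabel φ a := by
  constructor
  · rintro ⟨R, S, hR, hS, hRS, hP, φ, hfix, hinj, him, hc⟩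
    exact ⟨R, S, φ, ⟨hR, hS, hRS, hP, hfix, hinj, him⟩, funext₂ hc⟩
  · rintro ⟨R, S, φ, ⟨hR, hS, hRS, hP, hfix, hinj, him⟩, rfl⟩
    exact ⟨R, S, hR, hS, hRS, hP, φ, hfix, hinj, him, fun _ _ => rfl⟩

lemma IsGluing.step {P : ℕ → Prop} {a : Config X d N} {R S : Finset X} {φ : X → X}
    (h : IsGluing P a R S φ) : Step P a (relabel φ a) :=
  step_iff.2 ⟨R, S, φ, h, rfl⟩

lemma uniteStep_iff {a c : Config X d N} :
    UniteStep a c ↔ ∃ R S φ, IsBdryRidge a R ∧ IsBdryRidge a S ∧ Disjoint R S ∧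
      (∀ i ∈ cells a R, ∀ i' ∈ cells a S, ¬ (dualGraph a).Reachable i i') ∧
      IsRidgeMap R S φ ∧ c = relabel φ a := by
  constructor
  · rintro ⟨R, S, hR, hS, hRS, hreach, φ, hfix, hinj, him, hc⟩
    exact ⟨R, S, φ, hR, hS, hRS, hreach, ⟨hfix, hinj, him⟩, funext₂ hc⟩
  · rintro ⟨R, S, φ, hR, hS, hRS, hreach, ⟨hfix, hinj, him⟩, rfl⟩
    exact ⟨R, S, hR, hS, hRS, hreach, φ, hfix, hinj, him, fun _ _ => rfl⟩

lemma IsRidgeMap.mapsTo {R S : Finset X} {φ : X → X} (h : IsRidgeMap R S φ) :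
    Set.MapsTo φ ↑R ↑S := fun _ hx => h.image_eq ▸ Finset.mem_image_of_mem φ hx

lemma IsRidgeMap.image_subset {R S : Finset X} {φ : X → X} (h : IsRidgeMap R S φ) :
    S.image φ ⊆ S := by
  intro x hx
  obtain ⟨y, hy, rfl⟩ := Finset.mem_image.1 hx
  by_cases hyR : y ∈ R
  · exact h.mapsTo hyR
  · rwa [h.fix y hyR]

lemma IsRidgeMap.usedVerts_relabel_subset {R S : Finset X} {φ : X → X} (h : IsRidgeMap R S φ)
    {a : Config X d N} (hS : ↑S ⊆ usedVerts a) : usedVerts (relabel φ a) ⊆ usedVerts a := by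
  rintro _ ⟨i, j, rfl⟩
  by_cases hR : a i j ∈ R
  · exact hS (h.mapsTo hR)
  · exact ⟨i, j, (h.fix _ hR).symm⟩

lemma isRidgeMap_transport {Y : Type*} {θ ξ : Y → X} {Z : Finset Y} (hθ : Set.InjOn θ Z)
    (hξ : Set.InjOn ξ Z) : IsRidgeMap (Z.image θ) (Z.image ξ) (transport θ ξ Z) := by
  refine ⟨fun y hy => transport_of_notMem ξ (by simpa using hy), ?_, ?_⟩
  · rintro _ hx' _ hy' hxy
    obtain ⟨x, hx, rfl⟩ := Finset.mem_image.1 hx'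
    obtain ⟨y, hy, rfl⟩ := Finset.mem_image.1 hy'
    rw [transport_apply ξ hθ hx, transport_apply ξ hθ hy] at hxy
    rw [hξ hx hy hxy]
  · rw [Finset.image_image]
    exact Finset.image_congr fun x hx => transport_apply ξ hθ hx

lemma IsRidgeMap.conj {Y : Type*} [DecidableEq Y] {R S : Finset X} {φ : X → X}
    (h : IsRidgeMap R S φ) {θ : X → Y} {U : Set X} (hθ : Set.InjOn θ U) (hR : ↑R ⊆ U)
    (hS : ↑S ⊆ U) :
    IsRidgeMap (R.image θ) (S.image θ) (transport θ (θ ∘ φ) U) := by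
  refine ⟨fun y hy => ?_, ?_, ?_⟩
  · by_cases hyU : y ∈ θ '' U
    · obtain ⟨x, hx, rfl⟩ := hyU
      have hxR : x ∉ R := fun h => hy (Finset.mem_image_of_mem θ h)
      rw [transport_apply _ hθ hx, Function.comp_apply, h.fix x hxR]
    · exact transport_of_notMem _ hyU
  · rintro _ hx' _ hy' hxy
    obtain ⟨x, hx, rfl⟩ := Finset.mem_image.1 hx'
    obtain ⟨y, hy, rfl⟩ := Finset.mem_image.1 hy'
    rw [transport_apply _ hθ (hR hx), transport_apply _ hθ (hR hy)] at hxy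
    rw [h.injOn hx hy (hθ (hS (h.mapsTo hx)) (hS (h.mapsTo hy)) hxy)]
  · rw [Finset.image_image, ← h.image_eq, Finset.image_image]
    exact Finset.image_congr fun x hx => transport_apply _ hθ (hR hx)

lemma IsGluing.map {P : ℕ → Prop} {a : Config X d N} {R S : Finset X} {φ : X → X}
    (h : IsGluing P a R S φ) {Y : Type*} [DecidableEq Y] {θ : X → Y}
    (hθ : Set.InjOn θ (usedVerts a)) :
    IsGluing P (relabel θ a) (R.image θ) (S.image θ) (transport θ (θ ∘ φ) (usedVerts a)) := by
  obtain ⟨hR, hS, hRS, hP, hφ⟩ := h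
  have hRU := hR.subset_usedVerts
  have hSU := hS.subset_usedVerts
  refine ⟨hR.map hθ, hS.map hθ, fun he => hRS ?_, ?_, hφ.conj hθ hRU hSU⟩
  · exact subset_antisymm ((finset_image_subset_image_iff hθ hRU hSU).1 he.le)
      ((finset_image_subset_image_iff hθ hSU hRU).1 he.ge)
  · rwa [← Finset.image_inter_of_injOn _ _ (hθ.mono (by simpa using And.intro hRU hSU)),
      Finset.card_image_of_injOn (hθ.mono fun x hx => hRU (Finset.mem_inter.1 hx).1)]

end Gluings

section Replay

variable {X Y : Type*} [DecidableEq X] [DecidableEq Y] {d N M K : ℕ} {P : ℕ → Prop}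

lemma IsGluing.union_left {a : Config X d N} {b : Config X d M} {R S : Finset X} {φ : X → X}
    (h : IsGluing P a R S φ) (hR : ∀ j, ¬ R ⊆ facet b j) (hS : ∀ j, ¬ S ⊆ facet b j) :
    IsGluing P (union a b) R S φ :=
  ⟨h.source.union_left hR, h.target.union_left hS, h.ne, h.cond, h.ridgeMap⟩

lemma usedVerts_subset_of_chain {a e : Config X d N} (h : Relation.ReflTransGen (Step P) a e) :
    usedVerts e ⊆ usedVerts a := by
  refine usedVerts_subset_of_reflTransGen (fun _ _ hs => ?_) h
  obtain ⟨R, S, φ, hg, rfl⟩ := step_iff.1 hs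
  exact hg.ridgeMap.usedVerts_relabel_subset hg.target.subset_usedVerts

lemma card_cells_comp_equiv {N' : ℕ} (σ : Fin N' ≃ Fin N) (c : Config X d N) (R : Finset X) :
    (cells (c ∘ σ) R).card = (cells c R).card := by
  simp only [cells, Finset.card_filter]
  exact σ.sum_comp fun i => if R ⊆ facet c i then 1 else 0

lemma chain_comp_equiv {N' : ℕ} (σ : Fin N' ≃ Fin N) {a e : Config X d N}
    (h : Relation.ReflTransGen (Step P) a e) : Relation.ReflTransGen (Step P) (a ∘ σ) (e ∘ σ) := by
  refine Relation.ReflTransGen.lift (· ∘ σ) (fun a c hs => ?_) a e h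
  obtain ⟨R, S, φ, ⟨hR, hS, hRS, hP, hφ⟩, rfl⟩ := step_iff.1 hs
  have hbdry : ∀ {T}, IsBdryRidge a T → IsBdryRidge (a ∘ σ) T :=
    fun hT => ⟨hT.1, (card_cells_comp_equiv σ a _).trans hT.2⟩
  exact step_iff.2 ⟨R, S, φ, ⟨hbdry hR, hbdry hS, hRS, hP, hφ⟩, rfl⟩

lemma chain_union_swap {a a' : Config X d N} {b b' : Config X d M}
    (h : Relation.ReflTransGen (Step P) (union a b) (union a' b')) :
    Relation.ReflTransGen (Step P) (union b a) (union b' a') := by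
  simpa only [union_comp_finAddFlip] using chain_comp_equiv finAddFlip h

lemma injOn_facet_of_proper_relabel {X' : Type*} {φ : X → X'} {a : Config X d N}
    (h : Proper (relabel φ a)) (i : Fin N) : Set.InjOn φ ↑(facet a i) := by
  intro x hx y hy hxy
  obtain ⟨j, rfl⟩ := mem_facet.1 hx
  obtain ⟨j', rfl⟩ := mem_facet.1 hy
  rw [h i hxy]

lemma IsGluing.image_target {a : Config X d N} {R S : Finset X} {φ : X → X}
    (h : IsGluing P a R S φ) (hc : Proper (relabel φ a)) : S.image φ = S := by
  obtain ⟨i, hi⟩ := h.target.exists_subset_facet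
  refine Finset.eq_of_subset_of_card_le h.ridgeMap.image_subset ?_
  rw [Finset.card_image_of_injOn ((injOn_facet_of_proper_relabel hc i).mono hi)]

/-- Once glued, the target ridge lies in two facets: the one that contained it and the image of
the one that contained the source ridge. -/
lemma IsGluing.two_le_card_cells {a : Config X d N} {R S : Finset X} {φ : X → X}
    (h : IsGluing P a R S φ) (hc : Proper (relabel φ a)) : 2 ≤ (cells (relabel φ a) S).card := by
  obtain ⟨iR, hiR⟩ := h.source.exists_subset_facet
  obtain ⟨iS, hiS⟩ := h.target.exists_subset_facet
  have hne : iR ≠ iS := by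
    rintro rfl
    obtain ⟨s, hsS, hsR⟩ : ∃ s ∈ S, s ∉ R := by
      by_contra! hSR
      exact h.ne (Finset.eq_of_subset_of_card_le hSR (h.source.1.trans h.target.1.symm).le).symm
    obtain ⟨r, hrR, hrs⟩ := Finset.mem_image.1 (h.ridgeMap.image_eq ▸ hsS)
    have hrs' : r = s := injOn_facet_of_proper_relabel hc iR (hiR hrR) (hiS hsS)
      (by rw [hrs, h.ridgeMap.fix s hsR])
    exact hsR (hrs' ▸ hrR)
  have hR : S ⊆ facet (relabel φ a) iR := by
    rw [facet_relabel, ← h.ridgeMap.image_eq]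
    exact Finset.image_subset_image hiR
  have hS : S ⊆ facet (relabel φ a) iS := by
    rw [facet_relabel, ← h.image_target hc]
    exact Finset.image_subset_image hiS
  exact Finset.one_lt_card_iff.2 ⟨iR, iS, mem_cells.2 hR, mem_cells.2 hS, hne⟩

lemma IsGluing.exists_pullback {a : Config X d N} {R S : Finset X} {φ : X → X}
    (h : IsGluing P a R S φ) (hc : Proper (relabel φ a)) {Z : Finset X}
    (hZ : IsBdryRidge (relabel φ a) Z) :
    ∃ Z₀, IsBdryRidge a Z₀ ∧ Z₀.image φ = Z ∧ Set.InjOn φ ↑Z₀ ∧ R ≠ Z₀ ∧ S ≠ Z₀ := by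
  obtain ⟨i, hi⟩ := Finset.card_eq_one.1 hZ.2
  have hZi : Z ⊆ (facet a i).image φ :=
    facet_relabel φ a i ▸ mem_cells.1 (hi ▸ Finset.mem_singleton_self i)
  have him : ((facet a i).filter fun x => φ x ∈ Z).image φ = Z := by
    refine subset_antisymm (fun z hz => ?_) fun z hz => ?_
    · obtain ⟨x, hx, rfl⟩ := Finset.mem_image.1 hz
      exact (Finset.mem_filter.1 hx).2
    · obtain ⟨x, hx, rfl⟩ := Finset.mem_image.1 (hZi hz)
      exact Finset.mem_image_of_mem φ (Finset.mem_filter.2 ⟨hx, hz⟩)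
  set Z₀ := (facet a i).filter fun x => φ x ∈ Z
  have hinj : Set.InjOn φ ↑Z₀ :=
    (injOn_facet_of_proper_relabel hc i).mono (Finset.coe_subset.2 (Finset.filter_subset _ _))
  have hcells : cells a Z₀ = {i} := by
    refine Finset.eq_singleton_iff_unique_mem.2
      ⟨mem_cells.2 (Finset.filter_subset _ _), fun i' hi' => ?_⟩
    simpa [him, hi] using cells_subset_cells_relabel φ a Z₀ hi'
  have hZS : Z ≠ S := fun hZS => by
    have := h.two_le_card_cells hc
    rw [← hZS, hZ.2] at this
    omega
  refine ⟨Z₀, ⟨?_, by rw [hcells, Finset.card_singleton]⟩, him, hinj, ?_, ?_⟩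
  · rw [← hZ.1, ← him, Finset.card_image_of_injOn hinj]
  · rintro rfl
    exact hZS (by rw [← him, h.ridgeMap.image_eq])
  · rintro rfl
    exact hZS (by rw [← him, h.image_target hc])

def MeetsWithin (b : Config Y d K) (U : Set Y) (Z : Finset Y) : Prop :=
  ∀ j, ↑(facet b j) ∩ U ⊆ ↑Z

lemma IsGluing.replay {a : Config X d N} {R S : Finset X} {φ : X → X} (h : IsGluing P a R S φ)
    {θ : X → Y} (hθ : Set.InjOn θ (usedVerts a)) {Z₀ : Finset X} (hZ₀ : IsBdryRidge a Z₀)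
    (hRZ : R ≠ Z₀) (hSZ : S ≠ Z₀) {b : Config Y d K}
    (hb : MeetsWithin b (θ '' usedVerts a) (Z₀.image θ)) :
    Step P (union (relabel θ a) b)
      (union (relabel θ (relabel φ a)) (relabel (transport θ (θ ∘ φ) (usedVerts a)) b)) := by
  have avoid : ∀ T, IsBdryRidge a T → T ≠ Z₀ → ∀ j, ¬ T.image θ ⊆ facet b j := by
    intro T hT hTZ j hTb
    refine hTZ (Finset.eq_of_subset_of_card_le ?_ (by rw [hZ₀.1, hT.1]))
    rw [← finset_image_subset_image_iff hθ hT.subset_usedVerts hZ₀.subset_usedVerts]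
    intro y hy
    refine hb j ⟨hTb hy, ?_⟩
    obtain ⟨x, hx, rfl⟩ := Finset.mem_image.1 hy
    exact ⟨x, hT.subset_usedVerts hx, rfl⟩
  have := ((h.map hθ).union_left (avoid R h.source hRZ) (avoid S h.target hSZ)).step
  rwa [relabel_union, relabel_transport _ hθ subset_rfl] at this

lemma MeetsWithin.conj {θ : X → Y} {U U' : Set X} (hθ : Set.InjOn θ U) (hU : U' ⊆ U)
    {φ : X → X} {Z₀ : Finset X} (hZ₀ : ↑Z₀ ⊆ U) {b : Config Y d K}
    (hb : MeetsWithin b (θ '' U) (Z₀.image θ)) :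
    MeetsWithin (relabel (transport θ (θ ∘ φ) U) b) (θ '' U') ((Z₀.image φ).image θ) := by
  rintro j y ⟨hy, hyU'⟩
  rw [Finset.mem_coe, facet_relabel, Finset.mem_image] at hy
  obtain ⟨x, hx, rfl⟩ := hy
  by_cases hxU : x ∈ θ '' U
  · obtain ⟨u, hu, rfl⟩ := hxU
    obtain ⟨z, hz, hzu⟩ := Finset.mem_image.1 (hb j ⟨hx, u, hu, rfl⟩)
    rw [hθ (hZ₀ hz) hu hzu] at hz
    rw [transport_apply _ hθ hu, Finset.mem_coe, Finset.image_image]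
    exact Finset.mem_image_of_mem _ hz
  · rw [transport_of_notMem _ hxU] at hyU'
    exact absurd (Set.image_mono hU hyU') hxU

/-- A gluing chain never glues the pull-back `Z₀` of a boundary ridge of its end, so it can be
replayed next to any block `b` that touches its start only along `Z₀`. -/
theorem exists_pullback_replay {a e : Config X d N} (chain : Relation.ReflTransGen (Step P) a e)
    (he : Proper e) {Z : Finset X} (hZ : IsBdryRidge e Z) :
    ∃ Z₀ Ψ, IsBdryRidge a Z₀ ∧ e = relabel Ψ a ∧ Z₀.image Ψ = Z ∧ Set.InjOn Ψ ↑Z₀ ∧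
      ∀ θ : X → Y, Set.InjOn θ (usedVerts a) → ∀ b : Config Y d K,
        MeetsWithin b (θ '' usedVerts a) (Z₀.image θ) →
        Relation.ReflTransGen (Step P) (union (relabel θ a) b)
          (union (relabel θ e) (relabel (transport θ (θ ∘ Ψ) (usedVerts a)) b)) := by
  induction chain using Relation.ReflTransGen.head_induction_on with
  | refl =>
    refine ⟨Z, id, hZ, rfl, Finset.image_id, Set.injOn_id _, fun θ hθ b _ => ?_⟩
    rw [Function.comp_id, transport_self hθ]
    rfl
  | @head a c hstep _ ih =>
    obtain ⟨R, S, φ, hg, rfl⟩ := step_iff.1 hstep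
    obtain ⟨Z₁, Ψ, hZ₁, rfl, hZ₁Ψ, hΨ, hreplay⟩ := ih
    obtain ⟨Z₀, hZ₀, hZ₀φ, hφ, hRZ, hSZ⟩ := hg.exists_pullback he.of_relabel hZ₁
    have hU := hg.ridgeMap.usedVerts_relabel_subset hg.target.subset_usedVerts
    have hmaps : Set.MapsTo φ (usedVerts a) (usedVerts (relabel φ a)) := by
      rw [usedVerts_relabel]
      exact Set.mapsTo_image φ _
    refine ⟨Z₀, Ψ ∘ φ, hZ₀, rfl, by rw [← Finset.image_image, hZ₀φ, hZ₁Ψ],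
      hΨ.comp hφ fun x hx => hZ₀φ ▸ Finset.mem_image_of_mem φ hx, fun θ hθ b hb => ?_⟩
    have hb' := hb.conj (φ := φ) hθ hU hZ₀.subset_usedVerts
    rw [hZ₀φ] at hb'
    have hrest := hreplay θ (hθ.mono hU) _ hb'
    rw [relabel_relabel _ (transport θ (θ ∘ φ) _), transport_comp hθ hU hmaps (θ ∘ Ψ)] at hrest
    exact .head (hg.replay hθ hZ₀ hRZ hSZ hb) hrest

end Replay

lemma _root_.SimpleGraph.Reachable.of_sum_inl {V W : Type*} {G : SimpleGraph V}
    {H : SimpleGraph W} {v v' : V} (h : (G ⊕g H).Reachable (.inl v) (.inl v')) :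
    G.Reachable v v' := by
  obtain ⟨p⟩ := h
  suffices ∀ x y (p : (G ⊕g H).Walk x y) v v', x = .inl v → y = .inl v' → G.Reachable v v' from
    this _ _ p v v' rfl rfl
  intro x y p
  induction p with
  | nil => rintro v v' rfl h; cases h; rfl
  | @cons x m y hxm p ih =>
    rintro v v' rfl rfl
    rcases m with u | u
    · exact (SimpleGraph.sum_adj_inl.1 hxm).reachable.trans (ih u v' rfl rfl)
    · exact absurd hxm (SimpleGraph.not_adj_sum_inl_inr v u)

lemma _root_.SimpleGraph.Reachable.of_sum_inr {V W : Type*} {G : SimpleGraph V}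
    {H : SimpleGraph W} {w w' : W} (h : (G ⊕g H).Reachable (.inr w) (.inr w')) :
    H.Reachable w w' :=
  (SimpleGraph.Iso.sumComm.reachable_iff.2 h).of_sum_inl

section DualGraph

variable {X Y : Type*} [DecidableEq X] [DecidableEq Y] {d N M : ℕ}

lemma dualGraph_adj {c : Config X d N} {i i' : Fin N} :
    (dualGraph c).Adj i i' ↔
      i ≠ i' ∧ ∃ R : Finset X, R.card = d ∧ R ⊆ facet c i ∧ R ⊆ facet c i' := by
  rw [dualGraph, SimpleGraph.fromRel_adj]
  refine and_congr_right fun _ => ⟨?_, Or.inl⟩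
  rintro (h | ⟨R, hR, h1, h2⟩)
  · exact h
  · exact ⟨R, hR, h2, h1⟩

lemma dualGraph_relabel {θ : X → Y} {c : Config X d N} (hθ : Set.InjOn θ (usedVerts c)) :
    dualGraph (relabel θ c) = dualGraph c := by
  ext i i'
  simp only [dualGraph_adj, facet_relabel]
  refine and_congr_right fun _ => ⟨?_, ?_⟩
  · rintro ⟨R, hR, h1, h2⟩
    obtain ⟨T, hT, rfl⟩ := Finset.subset_image_iff.1 h1
    have hTU : ↑T ⊆ usedVerts c := (Finset.coe_subset.2 hT).trans (facet_subset_usedVerts c i)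
    refine ⟨T, ?_, hT,
      (finset_image_subset_image_iff hθ hTU (facet_subset_usedVerts c i')).1 h2⟩
    rwa [Finset.card_image_of_injOn (hθ.mono hTU)] at hR
  · rintro ⟨R, hR, h1, h2⟩
    have hRU : ↑R ⊆ usedVerts c := (Finset.coe_subset.2 h1).trans (facet_subset_usedVerts c i)
    exact ⟨R.image θ, by rwa [Finset.card_image_of_injOn (hθ.mono hRU)],
      Finset.image_subset_image h1, Finset.image_subset_image h2⟩

variable {a : Config X d N} {b : Config X d M}

@[simp] lemma dualGraph_union_adj_castAdd {i i' : Fin N} :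
    (dualGraph (union a b)).Adj (Fin.castAdd M i) (Fin.castAdd M i') ↔ (dualGraph a).Adj i i' := by
  simp only [dualGraph_adj, facet_union_castAdd, ne_eq, Fin.castAdd_inj]

@[simp] lemma dualGraph_union_adj_natAdd {j j' : Fin M} :
    (dualGraph (union a b)).Adj (Fin.natAdd N j) (Fin.natAdd N j') ↔ (dualGraph b).Adj j j' := by
  simp only [dualGraph_adj, facet_union_natAdd, ne_eq, Fin.natAdd_inj]

lemma not_dualGraph_union_adj (hd : 0 < d) (hab : Disjoint (usedVerts a) (usedVerts b))
    (i : Fin N) (j : Fin M) : ¬ (dualGraph (union a b)).Adj (Fin.castAdd M i) (Fin.natAdd N j) := by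
  rw [dualGraph_adj, facet_union_castAdd, facet_union_natAdd]
  rintro ⟨-, R, hR, hRa, hRb⟩
  exact not_subset_facet_of_disjoint (Finset.card_pos.1 (hR ▸ hd))
    ((Finset.coe_subset.2 hRa).trans (facet_subset_usedVerts a i)) hab j hRb

def dualGraphUnionIso (hd : 0 < d) (hab : Disjoint (usedVerts a) (usedVerts b)) :
    dualGraph (union a b) ≃g dualGraph a ⊕g dualGraph b where
  toEquiv := finSumFinEquiv.symm
  map_rel_iff' {v w} := by
    obtain ⟨v, rfl⟩ := finSumFinEquiv.surjective v
    obtain ⟨w, rfl⟩ := finSumFinEquiv.surjective w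
    have hba := fun j i => mt (SimpleGraph.Adj.symm) (not_dualGraph_union_adj hd hab i j)
    rcases v with v | v <;> rcases w with w | w <;>
      simp [not_dualGraph_union_adj hd hab, hba]

lemma reachable_of_reachable_union_castAdd (hd : 0 < d)
    (hab : Disjoint (usedVerts a) (usedVerts b)) {i i' : Fin N}
    (h : (dualGraph (union a b)).Reachable (Fin.castAdd M i) (Fin.castAdd M i')) :
    (dualGraph a).Reachable i i' := by
  have := (dualGraphUnionIso hd hab).reachable_iff.2 h
  simp only [dualGraphUnionIso, RelIso.coe_fn_mk, finSumFinEquiv_symm_apply_castAdd] at this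
  exact this.of_sum_inl

lemma reachable_of_reachable_union_natAdd (hd : 0 < d)
    (hab : Disjoint (usedVerts a) (usedVerts b)) {j j' : Fin M}
    (h : (dualGraph (union a b)).Reachable (Fin.natAdd N j) (Fin.natAdd N j')) :
    (dualGraph b).Reachable j j' := by
  have := (dualGraphUnionIso hd hab).reachable_iff.2 h
  simp only [dualGraphUnionIso, RelIso.coe_fn_mk, finSumFinEquiv_symm_apply_natAdd] at this
  exact this.of_sum_inr

lemma not_reachable_union_castAdd_natAdd (hd : 0 < d)
    (hab : Disjoint (usedVerts a) (usedVerts b)) (i : Fin N) (j : Fin M) :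
    ¬ (dualGraph (union a b)).Reachable (Fin.castAdd M i) (Fin.natAdd N j) := fun h => by
  have := (dualGraphUnionIso hd hab).reachable_iff.2 h
  simp only [dualGraphUnionIso, RelIso.coe_fn_mk, finSumFinEquiv_symm_apply_castAdd,
    finSumFinEquiv_symm_apply_natAdd] at this
  exact SimpleGraph.not_reachable_sum_inl_inr i j this

lemma connected_dualGraph_union (ha : (dualGraph a).Connected) (hb : (dualGraph b).Connected)
    {i : Fin N} {j : Fin M} (hij : (dualGraph (union a b)).Adj (Fin.castAdd M i) (Fin.natAdd N j)) :
    (dualGraph (union a b)).Connected := by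
  let f : (dualGraph a ⊕g dualGraph b) ⊔ SimpleGraph.edge (.inl i) (.inr j) →g
      dualGraph (union a b) :=
    { toFun := finSumFinEquiv
      map_rel' := by
        rintro (x | x) (y | y) hxy <;>
          simp only [SimpleGraph.sup_adj, SimpleGraph.edge_adj, SimpleGraph.sum_adj_inl,
            SimpleGraph.sum_adj_inr, SimpleGraph.not_adj_sum_inl_inr] at hxy <;>
          simp_all [hij.symm] }
  exact (ha.sum_sup_edge hb).map f finSumFinEquiv.surjective

end DualGraph

section Trees

variable {X Y : Type*} [DecidableEq X] [DecidableEq Y] {d N M : ℕ}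

lemma UniteStep.usedVerts_subset {a c : Config X d N} (h : UniteStep a c) :
    usedVerts c ⊆ usedVerts a := by
  obtain ⟨R, S, φ, -, hS, -, -, hφ, rfl⟩ := uniteStep_iff.1 h
  exact hφ.usedVerts_relabel_subset hS.subset_usedVerts

lemma UniteStep.map {a c : Config X d N} (h : UniteStep a c) {θ : X → Y}
    (hθ : Set.InjOn θ (usedVerts a)) : UniteStep (relabel θ a) (relabel θ c) := by
  obtain ⟨R, S, φ, hR, hS, hRS, hreach, hφ, rfl⟩ := uniteStep_iff.1 h
  have hRU := hR.subset_usedVerts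
  have hSU := hS.subset_usedVerts
  refine uniteStep_iff.2 ⟨_, _, _, hR.map hθ, hS.map hθ, ?_, ?_, hφ.conj hθ hRU hSU,
    (relabel_transport (θ ∘ φ) hθ subset_rfl).symm⟩
  · rw [← Finset.disjoint_coe, Finset.coe_image, Finset.coe_image]
    exact (Finset.disjoint_coe.2 hRS).image hθ hRU hSU
  · rwa [cells_relabel hθ hRU, cells_relabel hθ hSU, dualGraph_relabel hθ]

lemma usedVerts_subset_of_uniteChain {a e : Config X d N}
    (h : Relation.ReflTransGen UniteStep a e) : usedVerts e ⊆ usedVerts a :=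
  usedVerts_subset_of_reflTransGen (fun _ _ h => UniteStep.usedVerts_subset h) h

lemma uniteChain_map {a e : Config X d N} (h : Relation.ReflTransGen UniteStep a e) {θ : X → Y}
    (hθ : Set.InjOn θ (usedVerts a)) :
    Relation.ReflTransGen UniteStep (relabel θ a) (relabel θ e) := by
  induction h with
  | refl => exact .refl
  | tail hab hbc ih =>
    exact ih.tail (hbc.map (hθ.mono (usedVerts_subset_of_uniteChain hab)))

variable {a c : Config X d N} {b : Config X d M}

lemma UniteStep.union_left (hd : 0 < d) (h : UniteStep a c)
    (hab : Disjoint (usedVerts a) (usedVerts b)) : UniteStep (union a b) (union c b) := by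
  obtain ⟨R, S, φ, hR, hS, hRS, hreach, hφ, rfl⟩ := uniteStep_iff.1 h
  have hb : ∀ {T}, IsBdryRidge a T → ∀ j, ¬ T ⊆ facet b j :=
    fun hT => not_subset_facet_of_disjoint (hT.nonempty hd) hT.subset_usedVerts hab
  refine uniteStep_iff.2 ⟨R, S, φ, hR.union_left (hb hR), hS.union_left (hb hS), hRS, ?_, hφ, ?_⟩
  · intro i hi i' hi'
    rw [mem_cells] at hi hi'
    induction i using Fin.addCases with
    | right j => exact absurd (by simpa using hi) (hb hR j)
    | left i =>
      induction i' using Fin.addCases with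
      | right j => exact absurd (by simpa using hi') (hb hS j)
      | left i' =>
        exact fun h => hreach i (mem_cells.2 (by simpa using hi)) i'
          (mem_cells.2 (by simpa using hi')) (reachable_of_reachable_union_castAdd hd hab h)
  · rw [relabel_union, relabel_eq_self_of_disjoint hφ.fix
      (Set.disjoint_of_subset_left hR.subset_usedVerts hab)]

lemma UniteStep.union_right (hd : 0 < d) (h : UniteStep a c)
    (hab : Disjoint (usedVerts b) (usedVerts a)) : UniteStep (union b a) (union b c) := by
  obtain ⟨R, S, φ, hR, hS, hRS, hreach, hφ, rfl⟩ := uniteStep_iff.1 h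
  have hb : ∀ {T}, IsBdryRidge a T → ∀ j, ¬ T ⊆ facet b j :=
    fun hT => not_subset_facet_of_disjoint (hT.nonempty hd) hT.subset_usedVerts hab.symm
  refine uniteStep_iff.2 ⟨R, S, φ, hR.union_right (hb hR), hS.union_right (hb hS), hRS, ?_, hφ, ?_⟩
  · intro i hi i' hi'
    rw [mem_cells] at hi hi'
    induction i using Fin.addCases with
    | left j => exact absurd (by simpa using hi) (hb hR j)
    | right i =>
      induction i' using Fin.addCases with
      | left j => exact absurd (by simpa using hi') (hb hS j)
      | right i' =>
        exact fun h => hreach i (mem_cells.2 (by simpa using hi)) i'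
          (mem_cells.2 (by simpa using hi')) (reachable_of_reachable_union_natAdd hd hab h)
  · rw [relabel_union, relabel_eq_self_of_disjoint hφ.fix
      (Set.disjoint_of_subset_left hR.subset_usedVerts hab.symm)]

lemma uniteChain_union (hd : 0 < d) {a' : Config X d N} {b' : Config X d M}
    (ha : Relation.ReflTransGen UniteStep a a') (hb : Relation.ReflTransGen UniteStep b b')
    (hab : Disjoint (usedVerts a) (usedVerts b)) :
    Relation.ReflTransGen UniteStep (union a b) (union a' b') := by
  have left : Relation.ReflTransGen UniteStep (union a b) (union a' b) := by
    induction ha with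
    | refl => exact .refl
    | tail hac hce ih =>
      exact ih.tail (hce.union_left hd (hab.mono_left (usedVerts_subset_of_uniteChain hac)))
  refine left.trans ?_
  induction hb with
  | refl => exact .refl
  | tail hbc hce ih => exact ih.tail (hce.union_right hd
      (hab.mono (usedVerts_subset_of_uniteChain ha) (usedVerts_subset_of_uniteChain hbc)))

end Trees

section Pools

variable {N₁ N₂ : ℕ} {J : Type*}

def inlPool (N₂ : ℕ) : Fin N₁ × J → Fin (N₁ + N₂) × J := Prod.map (Fin.castAdd N₂) id

def inrPool (N₁ : ℕ) : Fin N₂ × J → Fin (N₁ + N₂) × J := Prod.map (Fin.natAdd N₁) id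

lemma inlPool_injective : Function.Injective (inlPool N₂ : Fin N₁ × J → _) :=
  (Fin.castAdd_injective _ _).prodMap Function.injective_id

lemma inrPool_injective : Function.Injective (inrPool N₁ : Fin N₂ × J → _) :=
  (Fin.natAdd_injective _ _).prodMap Function.injective_id

lemma inlPool_ne_inrPool (p : Fin N₁ × J) (q : Fin N₂ × J) : inlPool N₂ p ≠ inrPool N₁ q := by
  intro h
  have := congrArg (fun x => (x.1 : ℕ)) h
  simp only [inlPool, inrPool, Prod.map_fst, Fin.val_castAdd, Fin.val_natAdd] at this
  omega

lemma std_add (d : ℕ) :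
    std d (N₁ + N₂) =
      union (relabel (inlPool N₂) (std d N₁)) (relabel (inrPool N₁) (std d N₂)) := by
  funext i j
  induction i using Fin.addCases <;> simp [std, relabel, inlPool, inrPool]

variable {d : ℕ}

lemma disjoint_usedVerts_inlPool_inrPool (a : Config (Fin N₁ × J) d N₁)
    (b : Config (Fin N₂ × J) d N₂) :
    Disjoint (usedVerts (relabel (inlPool N₂) a)) (usedVerts (relabel (inrPool N₁) b)) := by
  rw [usedVerts_relabel, usedVerts_relabel, Set.disjoint_left]
  rintro _ ⟨p, -, rfl⟩ ⟨q, -, hq⟩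
  exact inlPool_ne_inrPool p q hq.symm

variable [DecidableEq J]

lemma injOn_piecewise_inlPool {Z : Finset (Fin N₂ × J)} {κ : Fin N₂ × J → Fin N₁ × J}
    (hκ : Set.InjOn κ ↑Z) (U : Set (Fin N₂ × J)) :
    Set.InjOn (Z.piecewise (inlPool N₂ ∘ κ) (inrPool N₁)) U := by
  intro x _ y _ hxy
  by_cases hx : x ∈ Z <;> by_cases hy : y ∈ Z <;>
    simp only [Finset.piecewise_eq_of_mem, Finset.piecewise_eq_of_notMem, hx, hy,
      Function.comp_apply, not_false_eq_true] at hxy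
  · exact hκ hx hy (inlPool_injective hxy)
  · exact absurd hxy (inlPool_ne_inrPool _ _)
  · exact absurd hxy.symm (inlPool_ne_inrPool _ _)
  · exact inrPool_injective hxy

end Pools

section GlueTrees

lemma transport_comp_eq_piecewise {X Y : Type*} [DecidableEq X] {θ : X → Y}
    (hθ : Function.Injective θ) (ξ : X → Y) (Z : Finset X) :
    transport θ ξ ↑Z ∘ θ = Z.piecewise ξ θ := by
  funext x
  by_cases hx : x ∈ Z
  · rw [Function.comp_apply, Finset.piecewise_eq_of_mem _ _ _ hx, transport_apply ξ hθ.injOn hx]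
  · rw [Function.comp_apply, Finset.piecewise_eq_of_notMem _ _ _ hx, transport_of_notMem]
    rintro ⟨y, hy, hyx⟩
    exact hx (hθ hyx ▸ hy)

variable {d N₁ N₂ : ℕ} {tA : Config (Fin N₁ × Fin (d + 1)) d N₁}
  {tB : Config (Fin N₂ × Fin (d + 1)) d N₂} {ZA : Finset (Fin N₁ × Fin (d + 1))}
  {ZB : Finset (Fin N₂ × Fin (d + 1))} {m : Fin N₂ × Fin (d + 1) → Fin N₁ × Fin (d + 1)}

lemma image_piecewise_inlPool (hmZ : ZB.image m = ZA) :
    ZB.image (ZB.piecewise (inlPool N₂ ∘ m) (inrPool N₁)) = ZA.image (inlPool N₂) := by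
  rw [← hmZ, Finset.image_image]
  exact Finset.image_congr fun q hq => Finset.piecewise_eq_of_mem _ _ _ hq

lemma uniteStep_glue (hd : 0 < d) (hZA : IsBdryRidge tA ZA) (hZB : IsBdryRidge tB ZB)
    (hm : Set.InjOn m ↑ZB) (hmZ : ZB.image m = ZA) :
    UniteStep (union (relabel (inlPool N₂) tA) (relabel (inrPool N₁) tB))
      (union (relabel (inlPool N₂) tA)
        (relabel (ZB.piecewise (inlPool N₂ ∘ m) (inrPool N₁)) tB)) := by
  have hdisj := disjoint_usedVerts_inlPool_inrPool tA tB
  have hR := hZB.map (θ := inrPool N₁) inrPool_injective.injOn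
  have hS := hZA.map (θ := inlPool N₂) inlPool_injective.injOn
  have hφ := isRidgeMap_transport inrPool_injective.injOn (inlPool_injective.comp_injOn hm)
  rw [← Finset.image_image, hmZ] at hφ
  refine uniteStep_iff.2 ⟨_, _, _,
    hR.union_right (not_subset_facet_of_disjoint (hR.nonempty hd) hR.subset_usedVerts hdisj.symm),
    hS.union_left (not_subset_facet_of_disjoint (hS.nonempty hd) hS.subset_usedVerts hdisj),
    ?_, ?_, hφ, ?_⟩
  · rw [Finset.disjoint_left]
    rintro _ hx hy
    obtain ⟨q, -, rfl⟩ := Finset.mem_image.1 hx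
    obtain ⟨p, -, hp⟩ := Finset.mem_image.1 hy
    exact inlPool_ne_inrPool p q hp
  · intro i hi i' hi'
    rw [mem_cells] at hi hi'
    induction i using Fin.addCases with
    | left i =>
      exact absurd (by simpa using hi)
        (not_subset_facet_of_disjoint (hR.nonempty hd) hR.subset_usedVerts hdisj.symm i)
    | right j =>
      induction i' using Fin.addCases with
      | left i => exact fun h => not_reachable_union_castAdd_natAdd hd hdisj i j h.symm
      | right j' =>
        exact absurd (by simpa using hi')
          (not_subset_facet_of_disjoint (hS.nonempty hd) hS.subset_usedVerts hdisj j')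
  · have hinl : transport (inrPool N₁) (inlPool N₂ ∘ m) ↑ZB ∘ inlPool N₂ = inlPool N₂ :=
      funext fun p => transport_of_notMem _ fun ⟨q, _, hq⟩ => inlPool_ne_inrPool p q hq.symm
    rw [relabel_union, relabel_relabel, relabel_relabel, hinl,
      transport_comp_eq_piecewise inrPool_injective]

lemma connected_glue (htA : (dualGraph tA).Connected) (htB : (dualGraph tB).Connected)
    (hZA : IsBdryRidge tA ZA) (hZB : IsBdryRidge tB ZB) (hm : Set.InjOn m ↑ZB)
    (hmZ : ZB.image m = ZA) :
    (dualGraph (union (relabel (inlPool N₂) tA)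
      (relabel (ZB.piecewise (inlPool N₂ ∘ m) (inrPool N₁)) tB))).Connected := by
  obtain ⟨i, hi⟩ := hZA.exists_subset_facet
  obtain ⟨j, hj⟩ := hZB.exists_subset_facet
  refine connected_dualGraph_union (i := i) (j := j)
    (by rwa [dualGraph_relabel inlPool_injective.injOn])
    (by rwa [dualGraph_relabel (injOn_piecewise_inlPool hm _)]) ?_
  rw [dualGraph_adj, facet_union_castAdd, facet_union_natAdd, facet_relabel, facet_relabel]
  refine ⟨by simp [Fin.ext_iff]; omega, ZA.image (inlPool N₂), ?_, Finset.image_subset_image hi, ?_⟩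
  · rw [Finset.card_image_of_injective _ inlPool_injective, hZA.1]
  · rw [← image_piecewise_inlPool hmZ]
    exact Finset.image_subset_image hj

theorem IsTreeOfSimplicesC.glue (hd : 0 < d) (htA : IsTreeOfSimplicesC tA)
    (htB : IsTreeOfSimplicesC tB) (hZA : IsBdryRidge tA ZA) (hZB : IsBdryRidge tB ZB)
    (hm : Set.InjOn m ↑ZB) (hmZ : ZB.image m = ZA) :
    IsTreeOfSimplicesC (union (relabel (inlPool N₂) tA)
      (relabel (ZB.piecewise (inlPool N₂ ∘ m) (inrPool N₁)) tB)) := by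
  refine ⟨.tail ?_ (uniteStep_glue hd hZA hZB hm hmZ),
    connected_glue htA.2 htB.2 hZA hZB hm hmZ⟩
  rw [std_add]
  exact uniteChain_union hd (uniteChain_map htA.1 inlPool_injective.injOn)
    (uniteChain_map htB.1 inrPool_injective.injOn) (disjoint_usedVerts_inlPool_inrPool _ _)

end GlueTrees

section Labels

variable {X V : Type*} [DecidableEq X] [DecidableEq V] {d N : ℕ}

def labelPreimage (c : Config X d N) (e : X → V) (F : Finset V) : Finset X :=
  (Finset.univ.biUnion (facet c)).filter fun x => e x ∈ F

lemma mem_labelPreimage {c : Config X d N} {e : X → V} {F : Finset V} {x : X} :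
    x ∈ labelPreimage c e F ↔ x ∈ usedVerts c ∧ e x ∈ F := by
  simp [labelPreimage, mem_usedVerts]

lemma labelPreimage_subset (c : Config X d N) (e : X → V) (F : Finset V) :
    ↑(labelPreimage c e F) ⊆ usedVerts c :=
  fun _ hx => (mem_labelPreimage.1 hx).1

lemma exists_mem_labelPreimage {c : Config X d N} {e : X → V} {F : Finset V} {i : Fin N}
    (hF : F ⊆ facet (relabel e c) i) {v : V} (hv : v ∈ F) :
    ∃ x ∈ labelPreimage c e F, e x = v := by
  obtain ⟨x, hx, rfl⟩ := Finset.mem_image.1 (facet_relabel e c i ▸ hF hv)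
  exact ⟨x, mem_labelPreimage.2 ⟨facet_subset_usedVerts c i hx, hv⟩, rfl⟩

lemma image_labelPreimage {c : Config X d N} {e : X → V} {F : Finset V} {i : Fin N}
    (hF : F ⊆ facet (relabel e c) i) : (labelPreimage c e F).image e = F := by
  refine subset_antisymm (fun v hv => ?_) fun v hv => ?_
  · obtain ⟨x, hx, rfl⟩ := Finset.mem_image.1 hv
    exact (mem_labelPreimage.1 hx).2
  · obtain ⟨x, hx, rfl⟩ := exists_mem_labelPreimage hF hv
    exact Finset.mem_image_of_mem e hx

lemma IsBdryRidge.labelPreimage {c : Config X d N} {e : X → V} (he : Set.InjOn e (usedVerts c))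
    {F : Finset V} (hF : IsBdryRidge (relabel e c) F) : IsBdryRidge c (labelPreimage c e F) := by
  obtain ⟨i, hi⟩ := hF.exists_subset_facet
  have him := image_labelPreimage hi
  have hU := labelPreimage_subset c e F
  refine ⟨?_, ?_⟩
  · rw [← Finset.card_image_of_injOn (he.mono hU), him, hF.1]
  · rw [← cells_relabel he hU, him, hF.2]

lemma exists_matching {Y : Type*} [Nonempty X] {f : X → V} {g : Y → V} {s : Finset X}
    {t : Finset Y} (hf : Set.InjOn f ↑s) (hg : Set.InjOn g ↑t) (hst : s.image f = t.image g) :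
    ∃ m : Y → X, (∀ y ∈ t, m y ∈ s ∧ f (m y) = g y) ∧ Set.InjOn m ↑t ∧ t.image m = s := by
  have hex : ∀ y ∈ t, ∃ x ∈ s, f x = g y := fun y hy =>
    Finset.mem_image.1 (hst ▸ Finset.mem_image_of_mem g hy)
  choose! m hm using hex
  refine ⟨m, hm, fun y hy y' hy' h => hg hy hy' ?_, subset_antisymm ?_ fun x hx => ?_⟩
  · rw [← (hm y hy).2, ← (hm y' hy').2, h]
  · exact Finset.image_subset_iff.2 fun y hy => (hm y hy).1
  · obtain ⟨y, hy, hyx⟩ := Finset.mem_image.1 (hst ▸ Finset.mem_image_of_mem f hx)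
    exact Finset.mem_image.2 ⟨y, hy, hf (hm y hy).1 hx ((hm y hy).2.trans hyx)⟩

end Labels

section Sharing

variable {V A B W : Type*} [DecidableEq V] [DecidableEq A] [DecidableEq B]
  {d N₁ N₂ : ℕ} {gA : Config A d N₁} {gB : Config B d N₂} {eA : A → V} {eB : B → V}
  {s : Set (Finset V)} {lam : A → W} {mu : B → W}

/-- `lam` and `mu` give the positions of the vertices of `gA` and `gB` in the complex under
construction, in which the two copies of each ridge of `s` have been identified. -/
structure SharesExactly (gA : Config A d N₁) (gB : Config B d N₂) (eA : A → V) (eB : B → V)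
    (s : Set (Finset V)) (lam : A → W) (mu : B → W) : Prop where
  injOn_left : Set.InjOn lam (usedVerts gA)
  injOn_right : Set.InjOn mu (usedVerts gB)
  eq_iff : ∀ x ∈ usedVerts gA, ∀ y ∈ usedVerts gB, lam x = mu y ↔ eA x = eB y ∧ ∃ F ∈ s, eA x ∈ F

lemma sharesExactly_insert (heA : Set.InjOn eA (usedVerts gA)) {F : Finset V} {j : Fin N₂}
    (hFB : F ⊆ facet (relabel eB gB) j)
    (hlam : Set.InjOn lam (usedVerts gA \ labelPreimage gA eA F))
    (hmu : Set.InjOn mu (usedVerts gB))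
    (hout : ∀ x ∈ usedVerts gA, x ∉ labelPreimage gA eA F → ∀ y ∈ usedVerts gB,
      (lam x = mu y ↔ eA x = eB y ∧ ∃ F' ∈ s, eA x ∈ F'))
    (hglue : ∀ x ∈ labelPreimage gA eA F, ∀ y ∈ labelPreimage gB eB F, eA x = eB y →
      lam x = mu y) :
    SharesExactly gA gB eA eB (insert F s) lam mu := by
  have hF : ∀ {x}, x ∈ labelPreimage gA eA F → x ∈ usedVerts gA ∧ eA x ∈ F :=
    mem_labelPreimage.1
  have partner : ∀ x ∈ labelPreimage gA eA F,
      ∃ y ∈ usedVerts gB, eA x = eB y ∧ lam x = mu y := fun x hx => by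
    obtain ⟨y, hy, hxy⟩ := exists_mem_labelPreimage hFB (hF hx).2
    exact ⟨y, (mem_labelPreimage.1 hy).1, hxy.symm, hglue x hx y hy hxy.symm⟩
  have eq_iff_in : ∀ x ∈ labelPreimage gA eA F, ∀ y ∈ usedVerts gB,
      lam x = mu y ↔ eA x = eB y := fun x hx y hy => by
    obtain ⟨y', hy', hxy', hlam'⟩ := partner x hx
    refine ⟨fun h => by rw [hxy', hmu hy' hy (hlam'.symm.trans h)], fun h => ?_⟩
    exact hglue x hx y (mem_labelPreimage.2 ⟨hy, h ▸ (hF hx).2⟩) h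
  refine ⟨fun x₁ hx₁ x₂ hx₂ h => ?_, hmu, fun x hx y hy => ?_⟩
  · by_cases h₁ : x₁ ∈ labelPreimage gA eA F <;> by_cases h₂ : x₂ ∈ labelPreimage gA eA F
    · obtain ⟨y, hy, hxy, hl⟩ := partner x₁ h₁
      exact heA hx₁ hx₂ (hxy.trans ((eq_iff_in x₂ h₂ y hy).1 (h.symm.trans hl)).symm)
    · obtain ⟨y, hy, hxy, hl⟩ := partner x₁ h₁
      have := heA hx₁ hx₂ (hxy.trans ((hout x₂ hx₂ h₂ y hy).1 (h.symm.trans hl)).1.symm)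
      exact absurd (this ▸ h₁) h₂
    · obtain ⟨y, hy, hxy, hl⟩ := partner x₂ h₂
      have := heA hx₂ hx₁ (hxy.trans ((hout x₁ hx₁ h₁ y hy).1 (h.trans hl)).1.symm)
      exact absurd (this ▸ h₂) h₁
    · exact hlam ⟨hx₁, h₁⟩ ⟨hx₂, h₂⟩ h
  · simp only [Set.exists_mem_insert]
    by_cases hxF : x ∈ labelPreimage gA eA F
    · rw [eq_iff_in x hxF y hy]
      exact ⟨fun h => ⟨h, Or.inl (hF hxF).2⟩, And.left⟩
    · have hxF' : eA x ∉ F := fun h => hxF (mem_labelPreimage.2 ⟨hx, h⟩)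
      rw [hout x hx hxF y hy]
      simp only [hxF', false_or]

variable {F : Finset V} {mt : A → B}

lemma SharesExactly.eq_matching (h : SharesExactly gA gB eA eB s lam mu)
    (heB : Set.InjOn eB (usedVerts gB))
    (hmt : ∀ x ∈ labelPreimage gA eA F, mt x ∈ labelPreimage gB eB F ∧ eB (mt x) = eA x)
    {x : A} (hx : x ∈ labelPreimage gA eA F) {y : B} (hy : y ∈ usedVerts gB)
    (hxy : lam x = mu y) : y = mt x :=
  heB hy (labelPreimage_subset _ _ _ (hmt x hx).1)
    (((h.eq_iff x (labelPreimage_subset _ _ _ hx) y hy).1 hxy).1.symm.trans (hmt x hx).2.symm)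

lemma SharesExactly.insert_transport (h : SharesExactly gA gB eA eB s lam mu)
    (heA : Set.InjOn eA (usedVerts gA)) (heB : Set.InjOn eB (usedVerts gB)) {j : Fin N₂}
    (hFB : F ⊆ facet (relabel eB gB) j)
    (hmt : ∀ x ∈ labelPreimage gA eA F, mt x ∈ labelPreimage gB eB F ∧ eB (mt x) = eA x) :
    SharesExactly gA gB eA eB (insert F s)
      (transport lam (mu ∘ mt) ↑(labelPreimage gA eA F) ∘ lam) mu := by
  have hYA := labelPreimage_subset gA eA F
  have hout : ∀ x ∈ usedVerts gA, x ∉ labelPreimage gA eA F →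
      transport lam (mu ∘ mt) ↑(labelPreimage gA eA F) (lam x) = lam x := fun x hx hxY =>
    transport_of_notMem _ fun ⟨x', hx', he⟩ => hxY (h.injOn_left (hYA hx') hx he ▸ hx')
  refine sharesExactly_insert heA hFB (fun x₁ hx₁ x₂ hx₂ he => ?_) h.injOn_right
    (fun x hx hxY y hy => ?_) fun x hx y hy hxy => ?_
  · rw [Function.comp_apply, Function.comp_apply, hout _ hx₁.1 hx₁.2, hout _ hx₂.1 hx₂.2] at he
    exact h.injOn_left hx₁.1 hx₂.1 he
  · rw [Function.comp_apply, hout x hx hxY]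
    exact h.eq_iff x hx y hy
  · rw [Function.comp_apply, transport_apply _ (h.injOn_left.mono hYA) hx]
    exact congrArg mu (heB (labelPreimage_subset _ _ _ (hmt x hx).1) (labelPreimage_subset _ _ _ hy)
      ((hmt x hx).2.trans hxy))

lemma SharesExactly.relabel_transport_right (h : SharesExactly gA gB eA eB s lam mu)
    (heB : Set.InjOn eB (usedVerts gB))
    (hmt : ∀ x ∈ labelPreimage gA eA F, mt x ∈ labelPreimage gB eB F ∧ eB (mt x) = eA x) :
    relabel (transport lam (mu ∘ mt) ↑(labelPreimage gA eA F) ∘ mu) gB = relabel mu gB := by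
  refine funext₂ fun i j => ?_
  by_cases hmem : mu (gB i j) ∈ lam '' ↑(labelPreimage gA eA F)
  · obtain ⟨x, hx, hxy⟩ := hmem
    rw [relabel, Function.comp_apply, ← hxy,
      transport_apply _ (h.injOn_left.mono (labelPreimage_subset _ _ _)) hx, Function.comp_apply,
      ← h.eq_matching heB hmt hx ⟨i, j, rfl⟩ hxy]
    rfl
  · exact transport_of_notMem _ hmem

variable [DecidableEq W]

lemma SharesExactly.relabel_transport_left (h : SharesExactly gA gB eA eB s lam mu)
    (heB : Set.InjOn eB (usedVerts gB))
    (hmt : ∀ x ∈ labelPreimage gA eA F, mt x ∈ labelPreimage gB eB F ∧ eB (mt x) = eA x)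
    (hRS : (labelPreimage gA eA F).image lam = (labelPreimage gB eB F).image mu) :
    relabel (transport lam (mu ∘ mt) ↑(labelPreimage gA eA F) ∘ lam) gA = relabel lam gA := by
  refine funext₂ fun i j => ?_
  have hYA := labelPreimage_subset gA eA F
  by_cases hx : gA i j ∈ labelPreimage gA eA F
  · obtain ⟨y, hy, hyx⟩ := Finset.mem_image.1 (hRS ▸ Finset.mem_image_of_mem lam hx)
    rw [relabel, Function.comp_apply, transport_apply _ (h.injOn_left.mono hYA) hx,
      Function.comp_apply, ← h.eq_matching heB hmt hx (labelPreimage_subset _ _ _ hy) hyx.symm, hyx]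
    rfl
  · exact transport_of_notMem _ fun ⟨x', hx', he⟩ =>
      hx (h.injOn_left (hYA hx') ⟨i, j, rfl⟩ he ▸ hx')

lemma SharesExactly.isGluing (h : SharesExactly gA gB eA eB s lam mu)
    (heA : Set.InjOn eA (usedVerts gA)) (heB : Set.InjOn eB (usedVerts gB))
    (hFA : IsBdryRidge (relabel eA gA) F) (hFB : IsBdryRidge (relabel eB gB) F)
    (hmt : ∀ x ∈ labelPreimage gA eA F, mt x ∈ labelPreimage gB eB F ∧ eB (mt x) = eA x)
    (hmt_inj : Set.InjOn mt ↑(labelPreimage gA eA F))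
    (hmt_im : (labelPreimage gA eA F).image mt = labelPreimage gB eB F)
    (hRS : (labelPreimage gA eA F).image lam ≠ (labelPreimage gB eB F).image mu)
    (hmeet : ∃ x ∈ labelPreimage gA eA F, ∃ F' ∈ s, eA x ∈ F') :
    IsGluing (fun c => 1 ≤ c) (union (relabel lam gA) (relabel mu gB))
      ((labelPreimage gA eA F).image lam) ((labelPreimage gB eB F).image mu)
      (transport lam (mu ∘ mt) ↑(labelPreimage gA eA F)) := by
  have hYA := labelPreimage_subset gA eA F
  have hYB := labelPreimage_subset gB eB F
  have hA := (hFA.labelPreimage heA).map h.injOn_left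
  have hB := (hFB.labelPreimage heB).map h.injOn_right
  have hcard := (hA.1.trans hB.1.symm).ge
  refine ⟨hA.union_left fun j hsub => hRS ?_, hB.union_right fun i hsub => hRS ?_, hRS, ?_, ?_⟩
  · refine Finset.eq_of_subset_of_card_le (fun w hw => ?_) hcard
    obtain ⟨x, hx, rfl⟩ := Finset.mem_image.1 hw
    obtain ⟨y, hy, hyx⟩ := Finset.mem_image.1 (facet_relabel mu gB j ▸ hsub hw)
    rw [← hyx, h.eq_matching heB hmt hx (facet_subset_usedVerts gB j hy) hyx.symm]
    exact Finset.mem_image_of_mem mu (hmt x hx).1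
  · refine (Finset.eq_of_subset_of_card_le (fun w hw => ?_) (hA.1.trans hB.1.symm).le).symm
    obtain ⟨y, hy, rfl⟩ := Finset.mem_image.1 hw
    obtain ⟨x, hx, hxy⟩ := Finset.mem_image.1 (facet_relabel lam gA i ▸ hsub hw)
    have hxu := facet_subset_usedVerts gA i hx
    have hlab := ((h.eq_iff x hxu y (hYB hy)).1 hxy).1
    rw [← hxy]
    exact Finset.mem_image_of_mem lam
      (mem_labelPreimage.2 ⟨hxu, hlab ▸ (mem_labelPreimage.1 hy).2⟩)
  · obtain ⟨x, hx, F', hF', hxF'⟩ := hmeet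
    refine Finset.card_pos.2 ⟨lam x, Finset.mem_inter.2 ⟨Finset.mem_image_of_mem lam hx, ?_⟩⟩
    rw [(h.eq_iff x (hYA hx) (mt x) (hYB (hmt x hx).1)).2 ⟨(hmt x hx).2.symm, F', hF', hxF'⟩]
    exact Finset.mem_image_of_mem mu (hmt x hx).1
  · rw [← hmt_im, Finset.image_image]
    exact isRidgeMap_transport (h.injOn_left.mono hYA)
      (h.injOn_right.comp hmt_inj fun x hx => hYB (hmt x hx).1)

/-- The vertex that `F` shares with a ridge of `s` is already identified, which makes the gluing of
the two copies of `F` a Mogami gluing. -/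
lemma SharesExactly.exists_chain_insert (h : SharesExactly gA gB eA eB s lam mu)
    (heA : Set.InjOn eA (usedVerts gA)) (heB : Set.InjOn eB (usedVerts gB))
    (hFA : IsBdryRidge (relabel eA gA) F) (hFB : IsBdryRidge (relabel eB gB) F)
    (hmeet : ∃ F' ∈ s, (F ∩ F').Nonempty) :
    ∃ lam', Relation.ReflTransGen MogamiStep (union (relabel lam gA) (relabel mu gB))
        (union (relabel lam' gA) (relabel mu gB)) ∧
      SharesExactly gA gB eA eB (insert F s) lam' mu := by
  obtain ⟨i, hi⟩ := hFA.exists_subset_facet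
  obtain ⟨j, hj⟩ := hFB.exists_subset_facet
  obtain ⟨F', hF', u, hu⟩ := hmeet
  obtain ⟨x₀, hx₀, rfl⟩ := exists_mem_labelPreimage hi (Finset.mem_inter.1 hu).1
  obtain ⟨y₀, -, -⟩ := exists_mem_labelPreimage hj (Finset.mem_inter.1 hu).1
  have : Nonempty B := ⟨y₀⟩
  obtain ⟨mt, hmt, hmt_inj, hmt_im⟩ := exists_matching (heB.mono (labelPreimage_subset _ _ _))
    (heA.mono (labelPreimage_subset _ _ _)) (by rw [image_labelPreimage hj, image_labelPreimage hi])
  refine ⟨_, ?_, h.insert_transport heA heB hj hmt⟩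
  by_cases hRS : (labelPreimage gA eA F).image lam = (labelPreimage gB eB F).image mu
  · rw [h.relabel_transport_left heB hmt hRS]
  · have := (h.isGluing heA heB hFA hFB hmt hmt_inj hmt_im hRS
      ⟨x₀, hx₀, F', hF', (Finset.mem_inter.1 hu).2⟩).step
    rw [relabel_union, relabel_relabel, relabel_relabel, h.relabel_transport_right heB hmt] at this
    exact .single this

end Sharing

section GlueChains

variable {V J : Type*} [DecidableEq V] [DecidableEq J] {d N₁ N₂ K : ℕ}

lemma meetsWithin_relabel_piecewise (b : Config (Fin N₂ × J) d K) (Z : Finset (Fin N₂ × J))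
    (κ : Fin N₂ × J → Fin N₁ × J) (U : Set (Fin N₁ × J)) :
    MeetsWithin (relabel (Z.piecewise (inlPool N₂ ∘ κ) (inrPool N₁)) b) (inlPool N₂ '' U)
      ((Z.image κ).image (inlPool N₂)) := by
  rintro j y ⟨hy, p, -, hpy⟩
  rw [Finset.mem_coe, facet_relabel, Finset.mem_image] at hy
  obtain ⟨q, -, rfl⟩ := hy
  by_cases hq : q ∈ Z
  · rw [Finset.piecewise_eq_of_mem _ _ _ hq, Finset.mem_coe, Finset.image_image]
    exact Finset.mem_image_of_mem _ hq
  · rw [Finset.piecewise_eq_of_notMem _ _ _ hq] at hpy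
    exact absurd hpy (inlPool_ne_inrPool p q)

lemma meetsWithin_relabel_inlPool (a : Config (Fin N₁ × J) d K) (Z : Finset (Fin N₂ × J))
    (κ : Fin N₂ × J → Fin N₁ × J) (U : Set (Fin N₂ × J)) :
    MeetsWithin (relabel (inlPool N₂) a) (Z.piecewise (inlPool N₂ ∘ κ) (inrPool N₁) '' U)
      (Z.image (Z.piecewise (inlPool N₂ ∘ κ) (inrPool N₁))) := by
  rintro j y ⟨hy, q, -, rfl⟩
  rw [Finset.mem_coe, facet_relabel, Finset.mem_image] at hy
  obtain ⟨p, -, hp⟩ := hy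
  by_cases hq : q ∈ Z
  · exact Finset.mem_image_of_mem _ hq
  · rw [Finset.piecewise_eq_of_notMem _ _ _ hq] at hp
    exact absurd hp (inlPool_ne_inrPool p q)

lemma transport_inlPool_comp_piecewise {Ψ : Fin N₁ × J → Fin N₁ × J} {U : Set (Fin N₁ × J)}
    {Z : Finset (Fin N₂ × J)} {κ : Fin N₂ × J → Fin N₁ × J} (hκ : ∀ q ∈ Z, κ q ∈ U) :
    transport (inlPool N₂) (inlPool N₂ ∘ Ψ) U ∘ Z.piecewise (inlPool N₂ ∘ κ) (inrPool N₁) =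
      Z.piecewise (inlPool N₂ ∘ Ψ ∘ κ) (inrPool N₁) := by
  funext q
  by_cases hq : q ∈ Z
  · simp only [Function.comp_apply, Finset.piecewise_eq_of_mem _ _ _ hq]
    exact transport_apply _ inlPool_injective.injOn (hκ q hq)
  · simp only [Function.comp_apply, Finset.piecewise_eq_of_notMem _ _ _ hq]
    exact transport_of_notMem _ fun ⟨p, _, hp⟩ => inlPool_ne_inrPool p q hp

lemma inlPool_notMem_image_piecewise {Z : Finset (Fin N₂ × J)} {κ : Fin N₂ × J → Fin N₁ × J}
    {p : Fin N₁ × J} (hp : p ∉ Z.image κ) (U : Set (Fin N₂ × J)) :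
    inlPool N₂ p ∉ Z.piecewise (inlPool N₂ ∘ κ) (inrPool N₁) '' U := by
  rintro ⟨q, -, hq⟩
  by_cases hqZ : q ∈ Z
  · rw [Finset.piecewise_eq_of_mem _ _ _ hqZ] at hq
    exact hp (Finset.mem_image.2 ⟨q, hqZ, inlPool_injective hq⟩)
  · rw [Finset.piecewise_eq_of_notMem _ _ _ hqZ] at hq
    exact inlPool_ne_inrPool p q hq.symm

lemma sharesExactly_piecewise {gA : Config (Fin N₁ × J) d N₁} {gB : Config (Fin N₂ × J) d N₂}
    {eA : Fin N₁ × J → V} {eB : Fin N₂ × J → V} (heA : Set.InjOn eA (usedVerts gA))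
    (heB : Set.InjOn eB (usedVerts gB)) {F : Finset V} {j : Fin N₂}
    (hFB : F ⊆ facet (relabel eB gB) j) {UB : Set (Fin N₂ × J)} (hUB : usedVerts gB ⊆ UB)
    {Z : Finset (Fin N₂ × J)} (hZ : ↑Z ⊆ UB) {κ : Fin N₂ × J → Fin N₁ × J} (hκ : Set.InjOn κ ↑Z)
    (hκZ : Z.image κ = labelPreimage gA eA F) {Ψ : Fin N₂ × J → Fin N₂ × J}
    (hΨ : ∀ q ∈ Z, Ψ q ∈ labelPreimage gB eB F ∧ eB (Ψ q) = eA (κ q)) :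
    SharesExactly gA gB eA eB {F}
      (transport (Z.piecewise (inlPool N₂ ∘ κ) (inrPool N₁))
        (Z.piecewise (inlPool N₂ ∘ κ) (inrPool N₁) ∘ Ψ) UB ∘ inlPool N₂)
      (Z.piecewise (inlPool N₂ ∘ κ) (inrPool N₁)) := by
  set θ := Z.piecewise (inlPool N₂ ∘ κ) (inrPool N₁)
  have hθ : Set.InjOn θ UB := injOn_piecewise_inlPool hκ UB
  have hout : ∀ p ∉ labelPreimage gA eA F, transport θ (θ ∘ Ψ) UB (inlPool N₂ p) = inlPool N₂ p :=
    fun p hp => transport_of_notMem _ (inlPool_notMem_image_piecewise (hκZ ▸ hp) UB)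
  rw [← insert_empty_eq]
  refine sharesExactly_insert heA hFB (fun p₁ hp₁ p₂ hp₂ h => ?_) (hθ.mono hUB)
    (fun p _ hpY q hq => ?_) fun p hp q hq hpq => ?_
  · rw [Function.comp_apply, Function.comp_apply, hout _ hp₁.2, hout _ hp₂.2] at h
    exact inlPool_injective h
  · simp only [Set.mem_empty_iff_false, false_and, exists_false, and_false, iff_false]
    rw [Function.comp_apply, hout p hpY]
    exact fun h => inlPool_notMem_image_piecewise (hκZ ▸ hpY) UB ⟨q, hUB hq, h.symm⟩
  · obtain ⟨r, hr, rfl⟩ := Finset.mem_image.1 (hκZ ▸ hp)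
    have hθr : θ r = inlPool N₂ (κ r) := Finset.piecewise_eq_of_mem _ _ _ hr
    rw [Function.comp_apply, ← hθr, transport_apply _ hθ (hZ hr), Function.comp_apply]
    exact congrArg θ (heB (labelPreimage_subset _ _ _ (hΨ r hr).1) (labelPreimage_subset _ _ _ hq)
      ((hΨ r hr).2.trans hpq))

theorem exists_tree_chain_sharesExactly (hd : 0 < d)
    {tA gA : Config (Fin N₁ × Fin (d + 1)) d N₁} {tB gB : Config (Fin N₂ × Fin (d + 1)) d N₂}
    {eA : Fin N₁ × Fin (d + 1) → V} {eB : Fin N₂ × Fin (d + 1) → V}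
    (htA : IsTreeOfSimplicesC tA) (htB : IsTreeOfSimplicesC tB)
    (hA : Relation.ReflTransGen MogamiStep tA gA) (hB : Relation.ReflTransGen MogamiStep tB gB)
    (hpA : Proper gA) (hpB : Proper gB)
    (heA : Set.InjOn eA (usedVerts gA)) (heB : Set.InjOn eB (usedVerts gB)) {F : Finset V}
    (hFA : IsBdryRidge (relabel eA gA) F) (hFB : IsBdryRidge (relabel eB gB) F) :
    ∃ T lam mu, IsTreeOfSimplicesC T ∧
      Relation.ReflTransGen MogamiStep T (union (relabel lam gA) (relabel mu gB)) ∧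
      SharesExactly gA gB eA eB {F} lam mu := by
  obtain ⟨i, hi⟩ := hFA.exists_subset_facet
  obtain ⟨j, hj⟩ := hFB.exists_subset_facet
  obtain ⟨ZA, ΨA, hZA, rfl, hZAΨ, hΨA, replayA⟩ := exists_pullback_replay
    (Y := Fin (N₁ + N₂) × Fin (d + 1)) (K := N₂) hA hpA (hFA.labelPreimage heA)
  obtain ⟨ZB, ΨB, hZB, rfl, hZBΨ, hΨB, replayB⟩ := exists_pullback_replay
    (Y := Fin (N₁ + N₂) × Fin (d + 1)) (K := N₁) hB hpB (hFB.labelPreimage heB)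
  have : Nonempty (Fin N₁ × Fin (d + 1)) := ⟨(hZA.nonempty hd).choose⟩
  obtain ⟨m, hm, hm_inj, hm_im⟩ := exists_matching (f := eA ∘ ΨA) (g := eB ∘ ΨB)
    (heA.comp hΨA fun x hx => labelPreimage_subset _ _ _ (hZAΨ ▸ Finset.mem_image_of_mem ΨA hx))
    (heB.comp hΨB fun x hx => labelPreimage_subset _ _ _ (hZBΨ ▸ Finset.mem_image_of_mem ΨB hx))
    (by rw [← Finset.image_image, hZAΨ, image_labelPreimage hi, ← Finset.image_image, hZBΨ,
      image_labelPreimage hj])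
  have hκ : Set.InjOn (ΨA ∘ m) ↑ZB := hΨA.comp hm_inj fun q hq => (hm q hq).1
  have phase1 := replayA (inlPool N₂) inlPool_injective.injOn _
    (hm_im ▸ meetsWithin_relabel_piecewise tB ZB m (usedVerts tA))
  rw [relabel_relabel (transport _ _ _), transport_inlPool_comp_piecewise fun q hq =>
    hZA.subset_usedVerts (hm q hq).1] at phase1
  have phase2 := replayB _ (injOn_piecewise_inlPool hκ _) _
    (meetsWithin_relabel_inlPool (relabel ΨA tA) ZB (ΨA ∘ m) (usedVerts tB))
  refine ⟨_, _, _, htA.glue hd htB hZA hZB hm_inj hm_im, phase1.trans (chain_union_swap phase2),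
    sharesExactly_piecewise heA heB hj (usedVerts_subset_of_chain hB) hZB.subset_usedVerts hκ
      (by rw [← Finset.image_image, hm_im, hZAΨ]) fun q hq =>
        ⟨hZBΨ ▸ Finset.mem_image_of_mem ΨB hq, (hm q hq).2.symm⟩⟩

end GlueChains

lemma _root_.SimpleGraph.Preconnected.induction_on_finset {α : Type*} [Fintype α] [DecidableEq α]
    {G : SimpleGraph α} (hG : G.Preconnected) {p : Finset α → Prop} {s₀ : Finset α}
    (hs₀ : s₀.Nonempty) (h₀ : p s₀)
    (step : ∀ s, s₀ ⊆ s → p s → ∀ x ∉ s, ∀ y ∈ s, G.Adj x y → p (insert x s)) :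
    p Finset.univ := by
  suffices key : ∀ n, ∀ s, s₀ ⊆ s → p s → (Finset.univ \ s).card ≤ n → p Finset.univ from
    key _ s₀ subset_rfl h₀ le_rfl
  intro n
  induction n with
  | zero =>
    intro s _ hs hn
    rwa [← Finset.univ_subset_iff.1 (Finset.sdiff_eq_empty_iff_subset.1
      (Finset.card_eq_zero.1 (Nat.le_zero.1 hn)))]
  | succ n ih =>
    intro s hss hs hn
    by_cases huniv : s = Finset.univ
    · rwa [← huniv]
    obtain ⟨w, hw⟩ : ∃ w, w ∉ s := by
      by_contra! h
      exact huniv (Finset.eq_univ_of_forall h)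
    obtain ⟨u, hu⟩ := hs₀
    obtain ⟨e, -, he₁, he₂⟩ := (hG u w).some.exists_boundary_dart (↑s) (hss hu) hw
    refine ih (insert e.snd s) (hss.trans (Finset.subset_insert _ _))
      (step s hss hs _ he₂ _ he₁ e.adj.symm) ?_
    rw [Finset.sdiff_insert, Finset.card_erase_of_mem (Finset.mem_sdiff.2 ⟨Finset.mem_univ _, he₂⟩)]
    omega

section CommonRidges

variable {V : Type*} [DecidableEq V] {d N₁ N₂ : ℕ} {f : Config V d N₁} {g : Config V d N₂}

lemma interFacets_finite (f : Config V d N₁) (g : Config V d N₂) : (interFacets f g).Finite :=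
  (Set.finite_iUnion fun i => (facet f i).powerset.finite_toSet).subset
    fun _ ⟨_, ⟨i, hi⟩, _⟩ => Set.mem_iUnion.2 ⟨i, Finset.mem_powerset.2 hi⟩

lemma IsPseudo.isBdryRidge_of_mem_interFacets (hC : IsPseudo (union f g)) {F : Finset V}
    (hF : F ∈ interFacets f g) : IsBdryRidge f F ∧ IsBdryRidge g F := by
  obtain ⟨hFd, ⟨i, hi⟩, ⟨j, hj⟩⟩ := hF
  have h2 := hC.2 F hFd
  rw [card_cells_union] at h2
  have hf : 0 < (cells f F).card := Finset.card_pos.2 ⟨i, mem_cells.2 hi⟩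
  have hg : 0 < (cells g F).card := Finset.card_pos.2 ⟨j, mem_cells.2 hj⟩
  exact ⟨⟨hFd, by omega⟩, ⟨hFd, by omega⟩⟩

lemma exists_mem_interFacets
    (hpure : ∀ σ : Finset V, σ.Nonempty → (∃ i, σ ⊆ facet f i) →
      (∃ j, σ ⊆ facet g j) → ∃ R ∈ interFacets f g, σ ⊆ R)
    {v : V} (hf : v ∈ usedVerts f) (hg : v ∈ usedVerts g) : ∃ F ∈ interFacets f g, v ∈ F := by
  obtain ⟨i, hi⟩ := mem_usedVerts.1 hf
  obtain ⟨j, hj⟩ := mem_usedVerts.1 hg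
  obtain ⟨F, hF, hvF⟩ := hpure {v} (Finset.singleton_nonempty v)
    ⟨i, Finset.singleton_subset_iff.2 hi⟩ ⟨j, Finset.singleton_subset_iff.2 hj⟩
  exact ⟨F, hF, Finset.singleton_subset_iff.1 hvF⟩

end CommonRidges

lemma exists_relabel_eq_relabel {X W V : Type*} [Nonempty X] {d N : ℕ} {c : Config X d N}
    {κ : X → W} {e : X → V} (h : ∀ x ∈ usedVerts c, ∀ y ∈ usedVerts c, κ x = κ y ↔ e x = e y) :
    ∃ E : W → V, Set.InjOn E (usedVerts (relabel κ c)) ∧ relabel e c = relabel E (relabel κ c) := by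
  have hinv : ∀ x ∈ usedVerts c, e (Function.invFunOn κ (usedVerts c) (κ x)) = e x := fun x hx =>
    have hx' := Function.invFunOn_pos ⟨x, hx, rfl⟩
    (h _ hx'.1 x hx).1 hx'.2
  refine ⟨e ∘ Function.invFunOn κ (usedVerts c), ?_, funext₂ fun i j => (hinv _ ⟨i, j, rfl⟩).symm⟩
  rw [usedVerts_relabel]
  rintro _ ⟨x, hx, rfl⟩ _ ⟨y, hy, rfl⟩ hxy
  simp only [Function.comp_apply, hinv x hx, hinv y hy] at hxy
  exact (h x hx y hy).2 hxy

section Assembly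

variable {V A B W : Type*} {d N₁ N₂ : ℕ}
  {gA : Config A d N₁} {gB : Config B d N₂} {eA : A → V} {eB : B → V}
  {lam : A → W} {mu : B → W}

theorem SharesExactly.exists_chain_interFacets [DecidableEq V] [DecidableEq A] [DecidableEq B]
    [DecidableEq W] {F₀ : Finset V} (h : SharesExactly gA gB eA eB {F₀} lam mu)
    (heA : Set.InjOn eA (usedVerts gA)) (heB : Set.InjOn eB (usedVerts gB))
    (hC : IsPseudo (union (relabel eA gA) (relabel eB gB)))
    (hconn : (SimpleGraph.fromRel fun R S : interFacets (relabel eA gA) (relabel eB gB) =>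
      ((R : Finset V) ∩ (S : Finset V)).Nonempty).Connected)
    (hF₀ : F₀ ∈ interFacets (relabel eA gA) (relabel eB gB)) :
    ∃ lam', Relation.ReflTransGen MogamiStep (union (relabel lam gA) (relabel mu gB))
        (union (relabel lam' gA) (relabel mu gB)) ∧
      SharesExactly gA gB eA eB (interFacets (relabel eA gA) (relabel eB gB)) lam' mu := by
  have := (interFacets_finite (relabel eA gA) (relabel eB gB)).fintype
  have key := hconn.preconnected.induction_on_finset (s₀ := {⟨F₀, hF₀⟩})
    (p := fun t : Finset (interFacets (relabel eA gA) (relabel eB gB)) => ∃ lam',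
      Relation.ReflTransGen MogamiStep
      (union (relabel lam gA) (relabel mu gB)) (union (relabel lam' gA) (relabel mu gB)) ∧
      SharesExactly gA gB eA eB
        (Subtype.val '' (↑t : Set (interFacets (relabel eA gA) (relabel eB gB)))) lam' mu)
    (Finset.singleton_nonempty _) ⟨lam, .refl, by simpa using h⟩ ?_
  · simpa using key
  rintro t - ⟨lam', hchain, hsh⟩ F - F' hF' hadj
  have hmeet : ((F : Finset V) ∩ F').Nonempty := by
    rcases (SimpleGraph.fromRel_adj _ _ _).1 hadj with ⟨-, h' | h'⟩
    · exact h'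
    · rwa [Finset.inter_comm]
  obtain ⟨lam'', hchain', hsh'⟩ := hsh.exists_chain_insert heA heB
    (hC.isBdryRidge_of_mem_interFacets F.2).1 (hC.isBdryRidge_of_mem_interFacets F.2).2
    ⟨F', ⟨F', hF', rfl⟩, hmeet⟩
  exact ⟨lam'', hchain.trans hchain', by simpa [Set.image_insert_eq] using hsh'⟩

lemma SharesExactly.represents [Nonempty A] {s : Set (Finset V)}
    (h : SharesExactly gA gB eA eB s lam mu)
    (heA : Set.InjOn eA (usedVerts gA)) (heB : Set.InjOn eB (usedVerts gB))
    (hs : ∀ x ∈ usedVerts gA, ∀ y ∈ usedVerts gB, eA x = eB y → ∃ F ∈ s, eA x ∈ F) :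
    ∃ E : W → V, Set.InjOn E (usedVerts (union (relabel lam gA) (relabel mu gB))) ∧
      union (relabel eA gA) (relabel eB gB) =
        relabel E (union (relabel lam gA) (relabel mu gB)) := by
  have key := exists_relabel_eq_relabel (c := union (relabel Sum.inl gA) (relabel Sum.inr gB))
    (κ := Sum.elim lam mu) (e := Sum.elim eA eB) ?_
  · simpa only [relabel_union, relabel_relabel, Sum.elim_comp_inl, Sum.elim_comp_inr] using key
  have cross : ∀ x ∈ usedVerts gA, ∀ y ∈ usedVerts gB, lam x = mu y ↔ eA x = eB y :=
    fun x hx y hy => (h.eq_iff x hx y hy).trans ⟨And.left, fun hxy => ⟨hxy, hs x hx y hy hxy⟩⟩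
  rw [usedVerts_union, usedVerts_relabel, usedVerts_relabel]
  rintro _ (⟨x, hx, rfl⟩ | ⟨x, hx, rfl⟩) _ (⟨y, hy, rfl⟩ | ⟨y, hy, rfl⟩) <;>
    simp only [Sum.elim_inl, Sum.elim_inr]
  · exact ⟨fun hxy => congrArg eA (h.injOn_left hx hy hxy), fun hxy => congrArg lam (heA hx hy hxy)⟩
  · exact cross x hx y hy
  · exact eq_comm.trans ((cross y hy x hx).trans eq_comm)
  · exact ⟨fun hxy => congrArg eB (h.injOn_right hx hy hxy), fun hxy => congrArg mu (heB hx hy hxy)⟩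

end Assembly

theorem stmt9_general {V : Type*} [DecidableEq V] {d N₁ N₂ : ℕ} (hd : 2 ≤ d)
    (f : Config V d N₁) (g : Config V d N₂)
    (hC : IsPseudo (union f g))
    (hpure : ∀ σ : Finset V, σ.Nonempty → (∃ i, σ ⊆ facet f i) →
      (∃ j, σ ⊆ facet g j) → ∃ R ∈ interFacets f g, σ ⊆ R)
    (hconn : (SimpleGraph.fromRel fun R S : interFacets f g =>
      ((R : Finset V) ∩ (S : Finset V)).Nonempty).Connected)
    (hMA : IsMogami f) (hMB : IsMogami g) :
    IsMogami (union f g) := by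
  obtain ⟨tA, gA, htA, hchainA, eA, heA, hfA⟩ := hMA
  obtain ⟨tB, gB, htB, hchainB, eB, heB, hgB⟩ := hMB
  obtain rfl : f = relabel eA gA := funext₂ hfA
  obtain rfl : g = relabel eB gB := funext₂ hgB
  obtain ⟨⟨F₀, hF₀⟩⟩ := hconn.nonempty
  obtain ⟨hF₀A, hF₀B⟩ := hC.isBdryRidge_of_mem_interFacets hF₀
  obtain ⟨T, lam, mu, hT, hchain, hshare⟩ := exists_tree_chain_sharesExactly (by omega) htA htB
    hchainA hchainB hC.1.union_left.of_relabel hC.1.union_right.of_relabel heA heB hF₀A hF₀B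
  obtain ⟨lam', hchain', hshare'⟩ := hshare.exists_chain_interFacets heA heB hC hconn hF₀
  have : Nonempty (Fin N₁) := htA.2.nonempty
  obtain ⟨E, hE, hEq⟩ := hshare'.represents heA heB fun x hx y hy hxy =>
    exists_mem_interFacets hpure ((usedVerts_relabel eA gA).symm ▸ ⟨x, hx, rfl⟩)
      ((usedVerts_relabel eB gB).symm ▸ ⟨y, hy, hxy.symm⟩)
  exact ⟨T, _, hT, hchain.trans hchain', E, hE, fun i j => congrFun₂ hEq i j⟩

/-- if `A ∪ B = C` are `d`-pseudomanifolds, `A ∩ B` is pure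
`(d-1)`-dimensional and connected, and `A`, `B` are Mogami, then `C` is Mogami. -/
theorem stmt9 {V : Type*} [DecidableEq V] {d N₁ N₂ : ℕ} (hd : 2 ≤ d)
    (f : Config V d N₁) (g : Config V d N₂)
    (hA : IsPseudo f) (hB : IsPseudo g) (hC : IsPseudo (union f g))
    (hpure : ∀ σ : Finset V, σ.Nonempty → (∃ i, σ ⊆ facet f i) →
      (∃ j, σ ⊆ facet g j) → ∃ R ∈ interFacets f g, σ ⊆ R)
    (hconn : (SimpleGraph.fromRel fun R S : interFacets f g =>
      ((R : Finset V) ∩ (S : Finset V)).Nonempty).Connected)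
    (hMA : IsMogami f) (hMB : IsMogami g) :
    IsMogami (union f g) :=
  stmt9_general hd f g hC hpure hconn hMA hMB

end MogamiPaper
end
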